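/- arXiv:1505.07807 — 3 statements merged into one kernel-verified Lean document; each statement's English description precedes it below -/
import Mathlib

section
/- Let (X,d) be a pseudometric space and let {A₀,B₀} be a partial d-split of X. Then for any a,a' ∈ A₀, any b,b' ∈ B₀ and any x ∈ X ∖ (A₀ ∪ B₀), one has β^d_{{{a,a'},{b,b'}}} ≥ α^d_{{A₀∪{x}, B₀}} + α^d_{{A₀, B₀∪{x}}}. -/
open Set Function

noncomputable section

variable {X : Type*}

/-- `d` is a pseudometric on `X`. -/
def IsPseudometric (d : X → X → ℝ) : Prop :=
  (∀ x, d x x = 0) ∧ (∀ x y, d x y = d y x) ∧ ∀ x y z, d x z ≤ d x y + d y z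

/-- `d` is a metric on `X`. -/
def IsMetric (d : X → X → ℝ) : Prop :=
  IsPseudometric d ∧ ∀ x y, d x y = 0 → x = y

/-- `d` is integer-valued. -/
def IsIntegerValued (d : X → X → ℝ) : Prop := ∀ x y, ∃ n : ℤ, d x y = (n : ℝ)

/-- The quantity `β^d` associated to the four points `a, a', b, b'`. -/
def betaIdx (d : X → X → ℝ) (a a' b b' : X) : ℝ :=
  (max (max (d a b + d a' b') (d a' b + d a b')) (d a a' + d b b') - d a a' - d b b') / 2

/-- The isolation index `α^d_{{A,B}}` of the pair `{A,B}`. -/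
def isolIdx (d : X → X → ℝ) (A B : Set X) : ℝ :=
  sInf {r : ℝ | ∃ a ∈ A, ∃ a' ∈ A, ∃ b ∈ B, ∃ b' ∈ B, r = betaIdx d a a' b b'}

/-- `{A, B}` is a partial split of `X`. -/
def IsPartialSplit (A B : Set X) : Prop := A.Nonempty ∧ B.Nonempty ∧ Disjoint A B

/-- `{A, B}` is a split of `X`. -/
def IsSplit (A B : Set X) : Prop := IsPartialSplit A B ∧ A ∪ B = univ

/-- `{A, B}` is a `d`-split of `X`. -/
def IsDSplit (d : X → X → ℝ) (A B : Set X) : Prop := IsSplit A B ∧ 0 < isolIdx d A B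

open Classical in
/-- The split pseudometric `δ_S` of the split `{A, Aᶜ}`. -/
def splitDist (A : Set X) (x y : X) : ℝ := if x ∈ A ↔ y ∈ A then 0 else 1

lemma betaIdx_nonneg' (d : X → X → ℝ) (a a' b b' : X) : 0 ≤ betaIdx d a a' b b' := by
  have h := le_max_right (max (d a b + d a' b') (d a' b + d a b')) (d a a' + d b b')
  unfold betaIdx; linarith

lemma isolIdx_le' (d : X → X → ℝ) {A B : Set X} {p q r s : X}
    (hp : p ∈ A) (hq : q ∈ A) (hr : r ∈ B) (hs : s ∈ B) :
    isolIdx d A B ≤ betaIdx d p q r s := by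
  apply csInf_le
  · exact ⟨0, fun t ht => by
      obtain ⟨a, _, a', _, b, _, b', _, rfl⟩ := ht
      exact betaIdx_nonneg' d a a' b b'⟩
  · exact ⟨p, hp, q, hq, r, hr, s, hs, rfl⟩

lemma beta_cases' (d : X → X → ℝ) (a a' b b' : X) (r : ℝ) (h : r ≤ betaIdx d a a' b b') :
    (r ≤ (d a b + d a' b' - d a a' - d b b') / 2 ∧ d a' b + d a b' ≤ d a b + d a' b') ∨
    (r ≤ (d a' b + d a b' - d a a' - d b b') / 2 ∧ d a b + d a' b' ≤ d a' b + d a b') ∨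
    r ≤ 0 := by
  unfold betaIdx at h
  rcases le_total (d a b + d a' b') (d a' b + d a b') with h1 | h1 <;>
    rcases le_total (max (d a b + d a' b') (d a' b + d a b')) (d a a' + d b b') with h2 | h2
  · rw [max_eq_right h1] at h2; rw [max_eq_right h1, max_eq_right h2] at h
    right; right; linarith
  · rw [max_eq_right h1] at h2; rw [max_eq_right h1, max_eq_left h2] at h
    right; left; exact ⟨h, h1⟩
  · rw [max_eq_left h1] at h2; rw [max_eq_left h1, max_eq_right h2] at h
    right; right; linarith
  · rw [max_eq_left h1] at h2; rw [max_eq_left h1, max_eq_left h2] at h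
    left; exact ⟨h, h1⟩

theorem statement1 (d : X → X → ℝ) (hd : IsPseudometric d)
    (A₀ B₀ : Set X) (hps : IsPartialSplit A₀ B₀) (hpos : 0 < isolIdx d A₀ B₀)
    (a a' b b' x : X) (ha : a ∈ A₀) (ha' : a' ∈ A₀) (hb : b ∈ B₀) (hb' : b' ∈ B₀)
    (hx : x ∉ A₀ ∪ B₀) :
    isolIdx d (A₀ ∪ {x}) B₀ + isolIdx d A₀ (B₀ ∪ {x}) ≤ betaIdx d a a' b b' := by
  have hxA : x ∈ A₀ ∪ {x} := mem_union_right _ rfl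
  have hxB : x ∈ B₀ ∪ {x} := mem_union_right _ rfl
  have haU : a ∈ A₀ ∪ {x} := mem_union_left _ ha
  have ha'U : a' ∈ A₀ ∪ {x} := mem_union_left _ ha'
  have hbU : b ∈ B₀ ∪ {x} := mem_union_left _ hb
  have hb'U : b' ∈ B₀ ∪ {x} := mem_union_left _ hb'
  have h5 : isolIdx d (A₀ ∪ {x}) B₀ ≤ betaIdx d a a' b b' := isolIdx_le' d haU ha'U hb hb'
  have h6 : isolIdx d A₀ (B₀ ∪ {x}) ≤ betaIdx d a a' b b' := isolIdx_le' d ha ha' hbU hb'U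
  have hu1 : isolIdx d (A₀ ∪ {x}) B₀ ≤ betaIdx d a x b b' := isolIdx_le' d haU hxA hb hb'
  have hu2 : isolIdx d (A₀ ∪ {x}) B₀ ≤ betaIdx d a' x b b' := isolIdx_le' d ha'U hxA hb hb'
  have hv1 : isolIdx d A₀ (B₀ ∪ {x}) ≤ betaIdx d a a' b x := isolIdx_le' d ha ha' hbU hxB
  have hv2 : isolIdx d A₀ (B₀ ∪ {x}) ≤ betaIdx d a a' b' x := isolIdx_le' d ha ha' hb'U hxB
  have gb1 : (d a b + d a' b' - d a a' - d b b') / 2 ≤ betaIdx d a a' b b' := by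
    have h1 := le_max_left (d a b + d a' b') (d a' b + d a b')
    have h2 := le_max_left (max (d a b + d a' b') (d a' b + d a b')) (d a a' + d b b')
    unfold betaIdx; linarith
  have gb2 : (d a' b + d a b' - d a a' - d b b') / 2 ≤ betaIdx d a a' b b' := by
    have h1 := le_max_right (d a b + d a' b') (d a' b + d a b')
    have h2 := le_max_left (max (d a b + d a' b') (d a' b + d a b')) (d a a' + d b b')
    unfold betaIdx; linarith
  have g0 : (0:ℝ) ≤ betaIdx d a a' b b' := betaIdx_nonneg' d a a' b b'
  have s1 : d x b = d b x := hd.2.1 x b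
  have s2 : d x b' = d b' x := hd.2.1 x b'
  have s3 : d a x = d x a := hd.2.1 a x
  have s4 : d a' x = d x a' := hd.2.1 a' x
  rcases beta_cases' d a x b b' _ hu1 with ⟨hA1, hA1c⟩ | ⟨hA1, hA1c⟩ | hA1 <;>
    rcases beta_cases' d a' x b b' _ hu2 with ⟨hA2, hA2c⟩ | ⟨hA2, hA2c⟩ | hA2 <;>
      rcases beta_cases' d a a' b x _ hv1 with ⟨hB1, hB1c⟩ | ⟨hB1, hB1c⟩ | hB1 <;>
        rcases beta_cases' d a a' b' x _ hv2 with ⟨hB2, hB2c⟩ | ⟨hB2, hB2c⟩ | hB2 <;>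
          linarith
end
end

section
/- Let (X,d) be a pseudometric space with integer-valued pseudometric. Then for every x,y ∈ X, the set of d-splits S of X satisfying S(x) ≠ S(y) is finite and contains at most 2·d(x,y) elements. -/
open Set Function

noncomputable section

variable {X : Type*}

namespace S3

def crosses (A : Set X) (a a' b b' : X) : Prop :=
  (a ∈ A ∧ a' ∈ A ∧ b ∉ A ∧ b' ∉ A) ∨ (a ∉ A ∧ a' ∉ A ∧ b ∈ A ∧ b' ∈ A)


lemma sd_ineq1 (A : Set X) {a a' b b' : X} (h : ¬ crosses A a a' b b') :
    splitDist A a b + splitDist A a' b' ≤ splitDist A a a' + splitDist A b b' := by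
  by_cases ha : a ∈ A <;> by_cases ha' : a' ∈ A <;> by_cases hb : b ∈ A <;>
    by_cases hb' : b' ∈ A <;> simp_all [splitDist, crosses]

lemma sd_ineq2 (A : Set X) {a a' b b' : X} (h : ¬ crosses A a a' b b') :
    splitDist A a' b + splitDist A a b' ≤ splitDist A a a' + splitDist A b b' := by
  by_cases ha : a ∈ A <;> by_cases ha' : a' ∈ A <;> by_cases hb : b ∈ A <;>
    by_cases hb' : b' ∈ A <;> simp_all [splitDist, crosses]

lemma le_max3_1 (x y z : ℝ) : x ≤ max (max x y) z := le_trans (le_max_left _ _) (le_max_left _ _)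
lemma le_max3_2 (x y z : ℝ) : y ≤ max (max x y) z := le_trans (le_max_right _ _) (le_max_left _ _)
lemma le_max3_3 (x y z : ℝ) : z ≤ max (max x y) z := le_max_right _ _

lemma max3_sub_le {s1 s2 t1 t2 p q p' q' : ℝ} (h1 : s1 - p - q ≤ t1 - p' - q')
    (h2 : s2 - p - q ≤ t2 - p' - q') :
    (max (max s1 s2) (p+q) - p - q)/2 ≤ (max (max t1 t2) (p'+q') - p' - q')/2 := by
  rcases max_cases (max s1 s2) (p+q) with ⟨h3,h4⟩|⟨h3,h4⟩
  · rcases max_cases s1 s2 with ⟨h5,h6⟩|⟨h5,h6⟩ <;>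
      linarith [le_max3_1 t1 t2 (p'+q'), le_max3_2 t1 t2 (p'+q'), le_max3_3 t1 t2 (p'+q')]
  · linarith [le_max3_3 t1 t2 (p'+q')]

lemma beta_shift_noncross (d : X → X → ℝ) (A : Set X) (e : ℝ) (he : 0 ≤ e) {a a' b b' : X}
    (h : ¬ crosses A a a' b b') :
    betaIdx d a a' b b' ≤ betaIdx (fun u v => d u v - e * splitDist A u v) a a' b b' := by
  simp only [betaIdx]
  refine max3_sub_le ?_ ?_ <;>
    linarith [mul_le_mul_of_nonneg_left (sd_ineq1 A h) he,
      mul_le_mul_of_nonneg_left (sd_ineq2 A h) he]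


lemma extract {s1 s2 A B c : ℝ} (hc : 0 < c)
    (h : c ≤ (max (max s1 s2) (A + B) - A - B)/2) : A + B + 2*c ≤ max s1 s2 := by
  rcases max_cases (max s1 s2) (A+B) with ⟨h1,h2⟩|⟨h1,h2⟩ <;> linarith

lemma le_div2 {M A B c : ℝ} (T : ℝ) (h1 : T ≤ M) (h2 : A + B + 2*c ≤ T) : c ≤ (M - A - B)/2 := by
  linarith

lemma sd_mm {A : Set X} {u v : X} (h1 : u ∈ A) (h2 : v ∈ A) : splitDist A u v = 0 := by
  simp [splitDist, h1, h2]
lemma sd_nn {A : Set X} {u v : X} (h1 : u ∉ A) (h2 : v ∉ A) : splitDist A u v = 0 := by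
  simp [splitDist, h1, h2]
lemma sd_mn {A : Set X} {u v : X} (h1 : u ∈ A) (h2 : v ∉ A) : splitDist A u v = 1 := by
  simp [splitDist, h1, h2]
lemma sd_nm {A : Set X} {u v : X} (h1 : u ∉ A) (h2 : v ∈ A) : splitDist A u v = 1 := by
  simp [splitDist, h1, h2]

lemma cross_sd (A : Set X) {a a' b b' : X} (h : crosses A a a' b b') :
    splitDist A a b = 1 ∧ splitDist A a' b' = 1 ∧ splitDist A a' b = 1 ∧ splitDist A a b' = 1 ∧
      splitDist A a a' = 0 ∧ splitDist A b b' = 0 := by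
  rcases h with ⟨h1,h2,h3,h4⟩|⟨h1,h2,h3,h4⟩
  · exact ⟨sd_mn h1 h3, sd_mn h2 h4, sd_mn h2 h3, sd_mn h1 h4, sd_mm h1 h2, sd_nn h3 h4⟩
  · exact ⟨sd_nm h1 h3, sd_nm h2 h4, sd_nm h2 h3, sd_nm h1 h4, sd_nn h1 h2, sd_mm h3 h4⟩

lemma beta_cross_down (d : X → X → ℝ) (A : Set X) (e c : ℝ) (he : 0 ≤ e) (hc : 0 < c)
    {a a' b b' : X} (hcr : crosses A a a' b b') (hb : c ≤ betaIdx d a a' b b') :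
    c - e ≤ betaIdx (fun u v => d u v - e * splitDist A u v) a a' b b' := by
  obtain ⟨e1, e2, e3, e4, e5, e6⟩ := cross_sd A hcr
  simp only [betaIdx] at hb ⊢
  have E := extract hc hb
  rcases le_max_iff.mp E with hE|hE
  · refine le_div2 _ (le_max3_1 _ _ _) ?_
    rw [e1, e2, e5, e6]; linarith
  · refine le_div2 _ (le_max3_2 _ _ _) ?_
    rw [e3, e4, e5, e6]; linarith

lemma beta_cross_up (d : X → X → ℝ) (A : Set X) (e c : ℝ) (hc : 0 < c)
    {a a' b b' : X} (hcr : crosses A a a' b b')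
    (hb : c ≤ betaIdx (fun u v => d u v - e * splitDist A u v) a a' b b') :
    c + e ≤ betaIdx d a a' b b' := by
  obtain ⟨e1, e2, e3, e4, e5, e6⟩ := cross_sd A hcr
  simp only [betaIdx] at hb ⊢
  have E := extract hc hb
  rcases le_max_iff.mp E with hE|hE
  · refine le_div2 _ (le_max3_1 _ _ _) ?_
    rw [e1, e2, e5, e6] at hE; linarith
  · refine le_div2 _ (le_max3_2 _ _ _) ?_
    rw [e3, e4, e5, e6] at hE; linarith


lemma half_le_max {x y z : ℝ} (h : 2*z ≤ x + y) : z ≤ max x y := by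
  rcases le_total x y with h'|h'
  · rw [max_eq_right h']; linarith
  · rw [max_eq_left h']; linarith

/-- KEY five-point lemma -/
lemma key (d : X → X → ℝ) (a a' b b' p : X) (s t : ℝ) (hs : 0 < s) (ht : 0 < t)
    (h4 : s ≤ betaIdx d a p b b') (h5 : s ≤ betaIdx d a' p b b')
    (h2 : t ≤ betaIdx d a a' p b) (h3 : t ≤ betaIdx d a a' p b') :
    s + t ≤ betaIdx d a a' b b' := by
  simp only [betaIdx] at h2 h3 h4 h5 ⊢
  have E4 := extract hs h4
  have E5 := extract hs h5
  have E2 := extract ht h2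
  have E3 := extract ht h3
  have hh : d a a' + d b b' + 2*(s+t) ≤ max (d a b + d a' b') (d a' b + d a b') := by
    rcases le_max_iff.mp E4 with e4|e4 <;> rcases le_max_iff.mp E5 with e5|e5 <;>
      rcases le_max_iff.mp E2 with e2|e2 <;> rcases le_max_iff.mp E3 with e3|e3 <;>
      first
        | exact le_max_iff.mpr (Or.inl (by linarith))
        | exact le_max_iff.mpr (Or.inr (by linarith))
        | exact half_le_max (by linarith)
  linarith [le_max_left (max (d a b + d a' b') (d a' b + d a b')) (d a a' + d b b')]

lemma exists_p (A B : Set X) (a : X) (h1 : A ≠ B) (h2 : A ≠ Bᶜ) :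
    ∃ p, ((p ∈ A ↔ a ∈ A) ∧ ¬(p ∈ B ↔ a ∈ B)) ∨ (¬(p ∈ A ↔ a ∈ A) ∧ (p ∈ B ↔ a ∈ B)) := by
  by_cases haA : a ∈ A <;> by_cases haB : a ∈ B
  · have : ¬ ∀ q, q ∈ A ↔ q ∈ B := fun h => h1 (Set.ext h)
    obtain ⟨p, hp⟩ := not_forall.mp this
    exact ⟨p, by tauto⟩
  · have : ¬ ∀ q, q ∈ A ↔ q ∉ B := fun h =>
      h2 (Set.ext fun q => (h q).trans (Set.mem_compl_iff B q).symm)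
    obtain ⟨p, hp⟩ := not_forall.mp this
    exact ⟨p, by tauto⟩
  · have : ¬ ∀ q, q ∈ A ↔ q ∉ B := fun h =>
      h2 (Set.ext fun q => (h q).trans (Set.mem_compl_iff B q).symm)
    obtain ⟨p, hp⟩ := not_forall.mp this
    exact ⟨p, by tauto⟩
  · have : ¬ ∀ q, q ∈ A ↔ q ∈ B := fun h => h1 (Set.ext h)
    obtain ⟨p, hp⟩ := not_forall.mp this
    exact ⟨p, by tauto⟩

lemma crosses_s1 {A : Set X} {a a' b b' p : X} (hcA : crosses A a a' b b')
    (hpA : p ∈ A ↔ a ∈ A) : crosses A a p b b' := by unfold crosses at *; tauto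
lemma crosses_s2 {A : Set X} {a a' b b' p : X} (hcA : crosses A a a' b b')
    (hpA : p ∈ A ↔ a ∈ A) : crosses A a' p b b' := by unfold crosses at *; tauto
lemma crosses_s3 {B : Set X} {a a' b b' p : X} (hcB : crosses B a a' b b')
    (hpB : ¬(p ∈ B ↔ a ∈ B)) : crosses B a a' p b := by unfold crosses at *; tauto
lemma crosses_s4 {B : Set X} {a a' b b' p : X} (hcB : crosses B a a' b b')
    (hpB : ¬(p ∈ B ↔ a ∈ B)) : crosses B a a' p b' := by unfold crosses at *; tauto

lemma key2 (d : X → X → ℝ) (A B : Set X) (s t : ℝ) (hs : 0 < s) (ht : 0 < t)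
    (hαA : ∀ a a' b b' : X, crosses A a a' b b' → s ≤ betaIdx d a a' b b')
    (hαB : ∀ a a' b b' : X, crosses B a a' b b' → t ≤ betaIdx d a a' b b')
    (hne1 : A ≠ B) (hne2 : A ≠ Bᶜ) {a a' b b' : X}
    (hcA : crosses A a a' b b') (hcB : crosses B a a' b b') :
    s + t ≤ betaIdx d a a' b b' := by
  obtain ⟨p, hp⟩ := exists_p A B a hne1 hne2
  rcases hp with ⟨hpA, hpB⟩|⟨hpA, hpB⟩
  · exact key d a a' b b' p s t hs ht
      (hαA a p b b' (crosses_s1 hcA hpA))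
      (hαA a' p b b' (crosses_s2 hcA hpA))
      (hαB a a' p b (crosses_s3 hcB hpB))
      (hαB a a' p b' (crosses_s4 hcB hpB))
  · have := key d a a' b b' p t s ht hs
      (hαB a p b b' (crosses_s1 hcB hpB))
      (hαB a' p b b' (crosses_s2 hcB hpB))
      (hαA a a' p b (crosses_s3 hcA hpA))
      (hαA a a' p b' (crosses_s4 hcA hpA))
    linarith


lemma betaIdx_nonneg (d : X → X → ℝ) (a a' b b' : X) : 0 ≤ betaIdx d a a' b b' := by
  simp only [betaIdx]
  have := le_max3_3 (d a b + d a' b') (d a' b + d a b') (d a a' + d b b')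
  linarith

lemma cross_main (𝒜 : Finset (Set X)) :
    ∀ d : X → X → ℝ,
    (∀ A ∈ 𝒜, ∀ a a' b b' : X, crosses A a a' b b' → (1:ℝ)/2 ≤ betaIdx d a a' b b') →
    (∀ A ∈ 𝒜, ∀ B ∈ 𝒜, A ≠ B → A ≠ Bᶜ) →
    ∀ a a' b b' : X, (∀ A ∈ 𝒜, crosses A a a' b b') →
    (𝒜.card : ℝ)/2 ≤ betaIdx d a a' b b' := by
  classical
  induction 𝒜 using Finset.induction_on with
  | empty =>
    intro d _ _ a a' b b' _
    simpa using betaIdx_nonneg d a a' b b'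
  | @insert A₀ 𝒮 hA₀ IH =>
    intro d hα hne a a' b b' hcr
    have hmem₀ : A₀ ∈ insert A₀ 𝒮 := Finset.mem_insert_self _ _
    have hαA₀ := hα A₀ hmem₀
    have hα' : ∀ B ∈ 𝒮, ∀ a a' b b' : X, crosses B a a' b b' →
        (1:ℝ)/2 ≤ betaIdx (fun u v => d u v - (1/2) * splitDist A₀ u v) a a' b b' := by
      intro B hB a1 a1' b1 b1' hcrB
      by_cases hcrA : crosses A₀ a1 a1' b1 b1'
      · have hne2 : A₀ ≠ Bᶜ := hne A₀ hmem₀ B (Finset.mem_insert_of_mem hB)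
          (fun h => hA₀ (h ▸ hB))
        have h1 : (1:ℝ)/2 + 1/2 ≤ betaIdx d a1 a1' b1 b1' :=
          key2 d A₀ B (1/2) (1/2) (by norm_num) (by norm_num) hαA₀
            (hα B (Finset.mem_insert_of_mem hB)) (fun h => hA₀ (h ▸ hB)) hne2 hcrA hcrB
        have h2 := beta_cross_down d A₀ (1/2) 1 (by norm_num) (by norm_num) hcrA
          (by linarith)
        linarith
      · exact le_trans (hα B (Finset.mem_insert_of_mem hB) a1 a1' b1 b1' hcrB)
          (beta_shift_noncross d A₀ (1/2) (by norm_num) hcrA)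
    have hne' : ∀ A ∈ 𝒮, ∀ B ∈ 𝒮, A ≠ B → A ≠ Bᶜ := fun A hA B hB =>
      hne A (Finset.mem_insert_of_mem hA) B (Finset.mem_insert_of_mem hB)
    have hIH := IH (fun u v => d u v - (1/2) * splitDist A₀ u v) hα' hne' a a' b b'
      (fun B hB => hcr B (Finset.mem_insert_of_mem hB))
    rw [Finset.card_insert_of_notMem hA₀]
    rcases Nat.eq_zero_or_pos 𝒮.card with h0|h0
    · rw [h0]
      have := hαA₀ a a' b b' (hcr A₀ hmem₀)
      push_cast
      linarith
    · have hc : (0:ℝ) < (𝒮.card : ℝ)/2 := by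
        have : (0:ℝ) < (𝒮.card : ℝ) := by exact_mod_cast h0
        linarith
      have := beta_cross_up d A₀ (1/2) ((𝒮.card : ℝ)/2) hc (hcr A₀ hmem₀) hIH
      push_cast
      linarith


lemma betaIdx_swap (d : X → X → ℝ) (hsymm : ∀ u v, d u v = d v u) (a a' b b' : X) :
    betaIdx d b b' a a' = betaIdx d a a' b b' := by
  simp only [betaIdx]
  rw [hsymm b a, hsymm b' a', hsymm b' a, hsymm b a',
    add_comm (d a b') (d a' b), add_comm (d b b') (d a a')]
  ring

lemma beta_half {d : X → X → ℝ} (hint : IsIntegerValued d) (a a' b b' : X) :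
    ∃ n : ℤ, betaIdx d a a' b b' = (n : ℝ)/2 := by
  obtain ⟨n1, h1⟩ := hint a b
  obtain ⟨n2, h2⟩ := hint a' b'
  obtain ⟨n3, h3⟩ := hint a' b
  obtain ⟨n4, h4⟩ := hint a b'
  obtain ⟨n5, h5⟩ := hint a a'
  obtain ⟨n6, h6⟩ := hint b b'
  refine ⟨max (max (n1+n2) (n3+n4)) (n5+n6) - n5 - n6, ?_⟩
  simp only [betaIdx, h1, h2, h3, h4, h5, h6]
  push_cast
  ring

lemma isolIdx_le {d : X → X → ℝ} {A : Set X} {a a' b b' : X}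
    (ha : a ∈ A) (ha' : a' ∈ A) (hb : b ∈ Aᶜ) (hb' : b' ∈ Aᶜ) :
    isolIdx d A Aᶜ ≤ betaIdx d a a' b b' := by
  apply csInf_le
  · refine ⟨0, ?_⟩
    rintro r ⟨x1, _, x2, _, x3, _, x4, _, rfl⟩
    exact betaIdx_nonneg d x1 x2 x3 x4
  · exact ⟨a, ha, a', ha', b, hb, b', hb', rfl⟩

lemma dsplit_bound {d : X → X → ℝ} (hd : IsPseudometric d) (hint : IsIntegerValued d)
    {A : Set X} (hpos : 0 < isolIdx d A Aᶜ) :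
    ∀ a a' b b' : X, crosses A a a' b b' → (1:ℝ)/2 ≤ betaIdx d a a' b b' := by
  intro a a' b b' hcr
  have hhalf : ∀ u u' v v' : X, 0 < betaIdx d u u' v v' → (1:ℝ)/2 ≤ betaIdx d u u' v v' := by
    intro u u' v v' hβ
    obtain ⟨n, hn⟩ := beta_half hint u u' v v'
    rw [hn] at hβ ⊢
    have : (0:ℝ) < (n:ℝ) := by linarith
    have : (0:ℤ) < n := by exact_mod_cast this
    have : (1:ℝ) ≤ (n:ℝ) := by exact_mod_cast this
    linarith
  rcases hcr with ⟨ha, ha', hb, hb'⟩|⟨ha, ha', hb, hb'⟩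
  · exact hhalf a a' b b' (lt_of_lt_of_le hpos (isolIdx_le ha ha' hb hb'))
  · have h := lt_of_lt_of_le hpos (isolIdx_le hb hb' ha ha')
    rw [betaIdx_swap d hd.2.1 a a' b b'] at h
    exact hhalf a a' b b' h

lemma beta_xxyy {d : X → X → ℝ} (hd : IsPseudometric d) (x y : X) :
    betaIdx d x x y y = d x y := by
  have h0 : 0 ≤ d x y := by
    have h1 := hd.2.2 x y x
    have h2 := hd.1 x
    have h3 := hd.2.1 x y
    linarith [hd.2.1 y x]
  simp only [betaIdx, hd.1 x, hd.1 y]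
  rw [max_self, max_eq_left (by linarith : (0:ℝ) + 0 ≤ d x y + d x y)]
  ring

end S3

theorem statement3 (d : X → X → ℝ) (hd : IsPseudometric d)
    (hint : IsIntegerValued d) (x y : X) :
    {A : Set X | IsDSplit d A Aᶜ ∧ x ∈ A ∧ y ∉ A}.Finite ∧
      ({A : Set X | IsDSplit d A Aᶜ ∧ x ∈ A ∧ y ∉ A}.ncard : ℝ) ≤ 2 * d x y := by
  set T := {A : Set X | IsDSplit d A Aᶜ ∧ x ∈ A ∧ y ∉ A} with hT
  have hbound : ∀ F : Finset (Set X), ↑F ⊆ T → (F.card : ℝ) ≤ 2 * d x y := by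
    intro F hF
    have hmem : ∀ A, A ∈ F → A ∈ T := fun A hA => hF (Finset.mem_coe.mpr hA)
    have h := S3.cross_main F d
      (fun A hA => S3.dsplit_bound hd hint (hmem A hA).1.2)
      (fun A hA B hB hAB hc => by
        have hxB : x ∈ B := (hmem B hB).2.1
        have hxA : x ∈ A := (hmem A hA).2.1
        rw [hc] at hxA
        exact hxA hxB)
      x x y y
      (fun A hA => Or.inl ⟨(hmem A hA).2.1, (hmem A hA).2.1, (hmem A hA).2.2, (hmem A hA).2.2⟩)
    rw [S3.beta_xxyy hd x y] at h
    linarith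
  have hfin : T.Finite := by
    by_contra hinf
    obtain ⟨F, hFsub, hFcard⟩ :=
      Set.Infinite.exists_subset_card_eq hinf (⌈2 * d x y⌉₊ + 1)
    have h1 := hbound F hFsub
    have h2 := Nat.le_ceil (2 * d x y)
    rw [hFcard] at h1
    push_cast at h1
    linarith
  refine ⟨hfin, ?_⟩
  have h2 := hbound hfin.toFinset (by simp)
  rwa [Set.ncard_eq_toFinset_card _ hfin]
end
end

section
/- Let (X,d) be a pseudometric space with integer-valued pseudometric, let S_X be the set of all splits of X and let S ⊆ S_X be the set of all d-splits. Choose λ_S ∈ (−∞, α^d_S] for every S ∈ S and set λ_S = 0 for every S ∈ S_X ∖ S. Then d̃(x,y) := d(x,y) − ∑_{S ∈ S} λ_S δ_S(x,y) (for each pair x,y only finitely many summands are nonzero, since only finitely many d-splits separate x and y) is a pseudometric on X, and for every split S ∈ S_X one has α^{d̃}_S = α^d_S − λ_S. -/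
open Set Function

noncomputable section

variable {X : Type*}

/-! ### Basic lemmas -/

lemma beta_nonneg (e : X → X → ℝ) (a a' b b' : X) : 0 ≤ betaIdx e a a' b b' := by
  have h := le_max_right (max (e a b + e a' b') (e a' b + e a b')) (e a a' + e b b')
  unfold betaIdx; linarith

lemma beta_swap (e : X → X → ℝ) (hsym : ∀ x y, e x y = e y x) (a a' b b' : X) :
    betaIdx e b b' a a' = betaIdx e a a' b b' := by
  unfold betaIdx
  rw [hsym b a, hsym b' a', hsym b' a, hsym b a',
    add_comm (e a b') (e a' b), add_comm (e b b') (e a a')]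
  ring_nf

lemma isol_bdd (e : X → X → ℝ) (A B : Set X) :
    BddBelow {r : ℝ | ∃ a ∈ A, ∃ a' ∈ A, ∃ b ∈ B, ∃ b' ∈ B, r = betaIdx e a a' b b'} := by
  refine ⟨0, fun r hr => ?_⟩
  obtain ⟨a, _, a', _, b, _, b', _, rfl⟩ := hr
  exact beta_nonneg e a a' b b'

lemma isol_le (e : X → X → ℝ) {A B : Set X} {a a' b b' : X}
    (ha : a ∈ A) (ha' : a' ∈ A) (hb : b ∈ B) (hb' : b' ∈ B) :
    isolIdx e A B ≤ betaIdx e a a' b b' :=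
  csInf_le (isol_bdd e A B) ⟨a, ha, a', ha', b, hb, b', hb', rfl⟩

lemma isol_nonneg (e : X → X → ℝ) (A B : Set X) : 0 ≤ isolIdx e A B := by
  apply Real.sInf_nonneg
  rintro r ⟨a, _, a', _, b, _, b', _, rfl⟩
  exact beta_nonneg e a a' b b'

lemma le_isol (e : X → X → ℝ) {A B : Set X} (hA : A.Nonempty) (hB : B.Nonempty) {c : ℝ}
    (h : ∀ a a' b b', a ∈ A → a' ∈ A → b ∈ B → b' ∈ B → c ≤ betaIdx e a a' b b') :
    c ≤ isolIdx e A B := by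
  apply le_csInf
  · obtain ⟨a, ha⟩ := hA; obtain ⟨b, hb⟩ := hB
    exact ⟨_, ⟨a, ha, a, ha, b, hb, b, hb, rfl⟩⟩
  · rintro r ⟨a, ha, a', ha', b, hb, b', hb', rfl⟩
    exact h a a' b b' ha ha' hb hb'

lemma isol_symm (e : X → X → ℝ) (hsym : ∀ x y, e x y = e y x) (A B : Set X) :
    isolIdx e A B = isolIdx e B A := by
  unfold isolIdx
  congr 1
  ext r
  constructor
  · rintro ⟨a, ha, a', ha', b, hb, b', hb', rfl⟩
    exact ⟨b, hb, b', hb', a, ha, a', ha', (beta_swap e hsym a a' b b').symm⟩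
  · rintro ⟨b, hb, b', hb', a, ha, a', ha', rfl⟩
    exact ⟨a, ha, a', ha', b, hb, b', hb', (beta_swap e hsym b b' a a').symm⟩

/-! ### The five-point lemma -/

lemma max3_extract {x y z c : ℝ} (hc : 0 < c) (h : z + c ≤ max (max x y) z) :
    z + c ≤ x ∨ z + c ≤ y := by
  by_contra hcon
  push_neg at hcon
  have : max (max x y) z < z + c := max_lt (max_lt hcon.1 hcon.2) (by linarith)
  linarith

lemma five_lemma (e : X → X → ℝ) (a a' b b' w : X) (s t : ℝ)
    (h1 : t ≤ betaIdx e a a' w b) (h2 : t ≤ betaIdx e a a' w b')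
    (h3 : s ≤ betaIdx e a w b b') (h4 : s ≤ betaIdx e a' w b b')
    (h5 : s ≤ betaIdx e a a' b b') (h6 : t ≤ betaIdx e a a' b b') :
    s + t ≤ betaIdx e a a' b b' := by
  unfold betaIdx at *
  rcases le_or_gt t 0 with ht | ht
  · linarith
  rcases le_or_gt s 0 with hs | hs
  · linarith
  have hPM : e a b + e a' b' ≤ max (max (e a b + e a' b') (e a' b + e a b')) (e a a' + e b b') :=
    le_trans (le_max_left _ _) (le_max_left _ _)
  have hQM : e a' b + e a b' ≤ max (max (e a b + e a' b') (e a' b + e a b')) (e a a' + e b b') :=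
    le_trans (le_max_right _ _) (le_max_left _ _)
  have d1 : e a a' + e w b + 2 * t ≤ e a w + e a' b ∨ e a a' + e w b + 2 * t ≤ e a' w + e a b := by
    apply max3_extract (by linarith : (0:ℝ) < 2 * t); linarith
  have d2 : e a a' + e w b' + 2 * t ≤ e a w + e a' b' ∨ e a a' + e w b' + 2 * t ≤ e a' w + e a b' := by
    apply max3_extract (by linarith : (0:ℝ) < 2 * t); linarith
  have d3 : e a w + e b b' + 2 * s ≤ e a b + e w b' ∨ e a w + e b b' + 2 * s ≤ e w b + e a b' := by
    apply max3_extract (by linarith : (0:ℝ) < 2 * s); linarith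
  have d4 : e a' w + e b b' + 2 * s ≤ e a' b + e w b' ∨ e a' w + e b b' + 2 * s ≤ e w b + e a' b' := by
    apply max3_extract (by linarith : (0:ℝ) < 2 * s); linarith
  rcases d1 with h1' | h1' <;> rcases d2 with h2' | h2' <;>
    rcases d3 with h3' | h3' <;> rcases d4 with h4' | h4' <;> linarith

/-! ### Crossing additivity (claim A) -/

lemma claimA (e : X → X → ℝ) {A C : Set X} (hne : A ≠ C) {a a' b b' : X}
    (haA : a ∈ A) (ha'A : a' ∈ A) (hbA : b ∉ A) (hb'A : b' ∉ A)
    (haC : a ∈ C) (ha'C : a' ∈ C) (hbC : b ∉ C) (hb'C : b' ∉ C) :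
    isolIdx e A Aᶜ + isolIdx e C Cᶜ ≤ betaIdx e a a' b b' := by
  have hw : ∃ w, (w ∈ A ∧ w ∉ C) ∨ (w ∈ C ∧ w ∉ A) := by
    by_contra hcon
    push_neg at hcon
    apply hne
    ext x
    exact ⟨fun hx => (hcon x).1 hx, fun hx => (hcon x).2 hx⟩
  obtain ⟨w, hw | hw⟩ := hw
  · exact five_lemma e a a' b b' w (isolIdx e A Aᶜ) (isolIdx e C Cᶜ)
      (isol_le e haC ha'C hw.2 hbC) (isol_le e haC ha'C hw.2 hb'C)
      (isol_le e haA hw.1 hbA hb'A) (isol_le e ha'A hw.1 hbA hb'A)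
      (isol_le e haA ha'A hbA hb'A) (isol_le e haC ha'C hbC hb'C)
  · have := five_lemma e a a' b b' w (isolIdx e C Cᶜ) (isolIdx e A Aᶜ)
      (isol_le e haA ha'A hw.2 hbA) (isol_le e haA ha'A hw.2 hb'A)
      (isol_le e haC hw.1 hbC hb'C) (isol_le e ha'C hw.1 hbC hb'C)
      (isol_le e haC ha'C hbC hb'C) (isol_le e haA ha'A hbA hb'A)
    linarith

/-! ### splitDist facts -/

lemma splitDist_same {A : Set X} {x y : X} (h : x ∈ A ↔ y ∈ A) : splitDist A x y = 0 := by
  simp [splitDist, h]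

lemma splitDist_diff {A : Set X} {x y : X} (h : ¬ (x ∈ A ↔ y ∈ A)) : splitDist A x y = 1 := by
  simp only [splitDist, if_neg h]

/-! ### max-shift helpers -/

lemma Lshift (x y z c : ℝ) : max (max (x - c) (y - c)) (z - c) = max (max x y) z - c := by
  rw [← max_sub_sub_right, ← max_sub_sub_right]

lemma Lcross {x y z μ : ℝ} (h0 : z ≤ max x y) (h : z + 2 * μ ≤ max x y) :
    max (max (x - 2 * μ) (y - 2 * μ)) z = max (max x y) z - 2 * μ := by
  rw [max_sub_sub_right x y, max_eq_left (by linarith), max_eq_left h0]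

lemma Ldiag1 {x y z μ : ℝ} (h1 : x + 2 * μ ≤ max y z) (h2 : x ≤ max y z) :
    max (max x (y - 2 * μ)) (z - 2 * μ) - (z - 2 * μ) = max (max x y) z - z := by
  rw [max_assoc, max_sub_sub_right y z, max_eq_right (by linarith),
    max_assoc, max_eq_right h2]
  ring

lemma Ldiag2 {x y z μ : ℝ} (h1 : y + 2 * μ ≤ max x z) (h2 : y ≤ max x z) :
    max (max (x - 2 * μ) y) (z - 2 * μ) - (z - 2 * μ) = max (max x y) z - z := by
  rw [max_comm (x - 2*μ) y, Ldiag1 h1 h2, max_comm y x]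
def CrossQ (A : Set X) (a a' b b' : X) : Prop :=
  (a ∈ A ∧ a' ∈ A ∧ b ∉ A ∧ b' ∉ A) ∨ (a ∉ A ∧ a' ∉ A ∧ b ∈ A ∧ b' ∈ A)

open Classical in
lemma point_lemma (e : X → X → ℝ) (hsym : ∀ x y, e x y = e y x) (A : Set X)
    (hpos : 0 < isolIdx e A Aᶜ) {μ : ℝ} (hμ : μ ≤ isolIdx e A Aᶜ) (a a' b b' : X) :
    betaIdx (fun u v => e u v - μ * splitDist A u v) a a' b b'
      = betaIdx e a a' b b' - (if CrossQ A a a' b b' then μ else 0) := by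
  classical
  set al := isolIdx e A Aᶜ with hal
  by_cases ha : a ∈ A <;> by_cases ha' : a' ∈ A <;> by_cases hb : b ∈ A <;> by_cases hb' : b' ∈ A
  · -- case (True, True, True, True)
    have Eab : e a b - μ * splitDist A a b = e a b := by rw [splitDist_same (by tauto)]; ring
    have Ea1b1 : e a' b' - μ * splitDist A a' b' = e a' b' := by rw [splitDist_same (by tauto)]; ring
    have Ea1b : e a' b - μ * splitDist A a' b = e a' b := by rw [splitDist_same (by tauto)]; ring
    have Eab1 : e a b' - μ * splitDist A a b' = e a b' := by rw [splitDist_same (by tauto)]; ring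
    have Eaa1 : e a a' - μ * splitDist A a a' = e a a' := by rw [splitDist_same (by tauto)]; ring
    have Ebb1 : e b b' - μ * splitDist A b b' = e b b' := by rw [splitDist_same (by tauto)]; ring
    have hC : ¬ CrossQ A a a' b b' := by simp [CrossQ, ha, ha', hb, hb']
    simp only [betaIdx]
    rw [Eab, Ea1b1, Ea1b, Eab1, Eaa1, Ebb1, if_neg hC]
    ring
  · -- case (True, True, True, False)
    have Eab : e a b - μ * splitDist A a b = e a b := by rw [splitDist_same (by tauto)]; ring
    have Ea1b1 : e a' b' - μ * splitDist A a' b' = e a' b' - μ := by rw [splitDist_diff (by tauto)]; ring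
    have Ea1b : e a' b - μ * splitDist A a' b = e a' b := by rw [splitDist_same (by tauto)]; ring
    have Eab1 : e a b' - μ * splitDist A a b' = e a b' - μ := by rw [splitDist_diff (by tauto)]; ring
    have Eaa1 : e a a' - μ * splitDist A a a' = e a a' := by rw [splitDist_same (by tauto)]; ring
    have Ebb1 : e b b' - μ * splitDist A b b' = e b b' - μ := by rw [splitDist_diff (by tauto)]; ring
    have hC : ¬ CrossQ A a a' b b' := by simp [CrossQ, ha, ha', hb, hb']
    simp only [betaIdx]
    rw [Eab, Ea1b1, Ea1b, Eab1, Eaa1, Ebb1, if_neg hC]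
    rw [show e a b + (e a' b' - μ) = e a b + e a' b' - μ from by ring,
    show e a' b + (e a b' - μ) = e a' b + e a b' - μ from by ring,
    show e a a' + (e b b' - μ) = e a a' + e b b' - μ from by ring]
    rw [Lshift (e a b + e a' b') (e a' b + e a b') (e a a' + e b b') μ]
    ring
  · -- case (True, True, False, True)
    have Eab : e a b - μ * splitDist A a b = e a b - μ := by rw [splitDist_diff (by tauto)]; ring
    have Ea1b1 : e a' b' - μ * splitDist A a' b' = e a' b' := by rw [splitDist_same (by tauto)]; ring
    have Ea1b : e a' b - μ * splitDist A a' b = e a' b - μ := by rw [splitDist_diff (by tauto)]; ring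
    have Eab1 : e a b' - μ * splitDist A a b' = e a b' := by rw [splitDist_same (by tauto)]; ring
    have Eaa1 : e a a' - μ * splitDist A a a' = e a a' := by rw [splitDist_same (by tauto)]; ring
    have Ebb1 : e b b' - μ * splitDist A b b' = e b b' - μ := by rw [splitDist_diff (by tauto)]; ring
    have hC : ¬ CrossQ A a a' b b' := by simp [CrossQ, ha, ha', hb, hb']
    simp only [betaIdx]
    rw [Eab, Ea1b1, Ea1b, Eab1, Eaa1, Ebb1, if_neg hC]
    rw [show e a b - μ + e a' b' = e a b + e a' b' - μ from by ring,
    show e a' b - μ + e a b' = e a' b + e a b' - μ from by ring,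
    show e a a' + (e b b' - μ) = e a a' + e b b' - μ from by ring]
    rw [Lshift (e a b + e a' b') (e a' b + e a b') (e a a' + e b b') μ]
    ring
  · -- case (True, True, False, False)
    have Eab : e a b - μ * splitDist A a b = e a b - μ := by rw [splitDist_diff (by tauto)]; ring
    have Ea1b1 : e a' b' - μ * splitDist A a' b' = e a' b' - μ := by rw [splitDist_diff (by tauto)]; ring
    have Ea1b : e a' b - μ * splitDist A a' b = e a' b - μ := by rw [splitDist_diff (by tauto)]; ring
    have Eab1 : e a b' - μ * splitDist A a b' = e a b' - μ := by rw [splitDist_diff (by tauto)]; ring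
    have Eaa1 : e a a' - μ * splitDist A a a' = e a a' := by rw [splitDist_same (by tauto)]; ring
    have Ebb1 : e b b' - μ * splitDist A b b' = e b b' := by rw [splitDist_same (by tauto)]; ring
    have hC : CrossQ A a a' b b' := by simp [CrossQ, ha, ha', hb, hb']
    simp only [betaIdx]
    rw [Eab, Ea1b1, Ea1b, Eab1, Eaa1, Ebb1, if_pos hC]
    rw [show e a b - μ + (e a' b' - μ) = e a b + e a' b' - 2 * μ from by ring,
    show e a' b - μ + (e a b' - μ) = e a' b + e a b' - 2 * μ from by ring]
    have hq := isol_le e (B := Aᶜ) ha ha' (show b ∈ Aᶜ from hb) (show b' ∈ Aᶜ from hb')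
    rw [← hal] at hq
    unfold betaIdx at hq
    have hex : (e a a' + e b b') + 2 * al ≤ (e a b + e a' b') ∨ (e a a' + e b b') + 2 * al ≤ (e a' b + e a b') :=
      max3_extract (by linarith) (by linarith)
    have hm1 : (e a b + e a' b') ≤ max (e a b + e a' b') (e a' b + e a b') := le_max_left _ _
    have hm2 : (e a' b + e a b') ≤ max (e a b + e a' b') (e a' b + e a b') := le_max_right _ _
    have h0 : (e a a' + e b b') ≤ max (e a b + e a' b') (e a' b + e a b') := by rcases hex with h|h <;> linarith
    have h1 : (e a a' + e b b') + 2 * μ ≤ max (e a b + e a' b') (e a' b + e a b') := by rcases hex with h|h <;> linarith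
    rw [Lcross h0 h1]
    ring
  · -- case (True, False, True, True)
    have Eab : e a b - μ * splitDist A a b = e a b := by rw [splitDist_same (by tauto)]; ring
    have Ea1b1 : e a' b' - μ * splitDist A a' b' = e a' b' - μ := by rw [splitDist_diff (by tauto)]; ring
    have Ea1b : e a' b - μ * splitDist A a' b = e a' b - μ := by rw [splitDist_diff (by tauto)]; ring
    have Eab1 : e a b' - μ * splitDist A a b' = e a b' := by rw [splitDist_same (by tauto)]; ring
    have Eaa1 : e a a' - μ * splitDist A a a' = e a a' - μ := by rw [splitDist_diff (by tauto)]; ring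
    have Ebb1 : e b b' - μ * splitDist A b b' = e b b' := by rw [splitDist_same (by tauto)]; ring
    have hC : ¬ CrossQ A a a' b b' := by simp [CrossQ, ha, ha', hb, hb']
    simp only [betaIdx]
    rw [Eab, Ea1b1, Ea1b, Eab1, Eaa1, Ebb1, if_neg hC]
    rw [show e a b + (e a' b' - μ) = e a b + e a' b' - μ from by ring,
    show e a' b - μ + e a b' = e a' b + e a b' - μ from by ring,
    show e a a' - μ + e b b' = e a a' + e b b' - μ from by ring]
    rw [Lshift (e a b + e a' b') (e a' b + e a b') (e a a' + e b b') μ]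
    ring
  · -- case (True, False, True, False)
    have Eab : e a b - μ * splitDist A a b = e a b := by rw [splitDist_same (by tauto)]; ring
    have Ea1b1 : e a' b' - μ * splitDist A a' b' = e a' b' := by rw [splitDist_same (by tauto)]; ring
    have Ea1b : e a' b - μ * splitDist A a' b = e a' b - μ := by rw [splitDist_diff (by tauto)]; ring
    have Eab1 : e a b' - μ * splitDist A a b' = e a b' - μ := by rw [splitDist_diff (by tauto)]; ring
    have Eaa1 : e a a' - μ * splitDist A a a' = e a a' - μ := by rw [splitDist_diff (by tauto)]; ring
    have Ebb1 : e b b' - μ * splitDist A b b' = e b b' - μ := by rw [splitDist_diff (by tauto)]; ring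
    have hC : ¬ CrossQ A a a' b b' := by simp [CrossQ, ha, ha', hb, hb']
    simp only [betaIdx]
    rw [Eab, Ea1b1, Ea1b, Eab1, Eaa1, Ebb1, if_neg hC]
    rw [show e a' b - μ + (e a b' - μ) = e a' b + e a b' - 2 * μ from by ring,
    show e a a' - μ + (e b b' - μ) = e a a' + e b b' - 2 * μ from by ring]
    have hq := isol_le e (B := Aᶜ) ha hb (show a' ∈ Aᶜ from ha') (show b' ∈ Aᶜ from hb')
    rw [← hal] at hq
    unfold betaIdx at hq
    rw [hsym b a'] at hq
    have hex : (e a b + e a' b') + 2 * al ≤ (e a a' + e b b') ∨ (e a b + e a' b') + 2 * al ≤ (e a' b + e a b') :=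
      max3_extract (by linarith) (by linarith)
    have hm1 : (e a' b + e a b') ≤ max (e a' b + e a b') (e a a' + e b b') := le_max_left _ _
    have hm2 : (e a a' + e b b') ≤ max (e a' b + e a b') (e a a' + e b b') := le_max_right _ _
    have h1 : (e a b + e a' b') + 2 * μ ≤ max (e a' b + e a b') (e a a' + e b b') := by rcases hex with h|h <;> linarith
    have h2 : (e a b + e a' b') ≤ max (e a' b + e a b') (e a a' + e b b') := by rcases hex with h|h <;> linarith
    have hD := Ldiag1 (x := e a b + e a' b') (y := e a' b + e a b') (z := e a a' + e b b') (μ := μ) h1 h2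
    linarith [hD]
  · -- case (True, False, False, True)
    have Eab : e a b - μ * splitDist A a b = e a b - μ := by rw [splitDist_diff (by tauto)]; ring
    have Ea1b1 : e a' b' - μ * splitDist A a' b' = e a' b' - μ := by rw [splitDist_diff (by tauto)]; ring
    have Ea1b : e a' b - μ * splitDist A a' b = e a' b := by rw [splitDist_same (by tauto)]; ring
    have Eab1 : e a b' - μ * splitDist A a b' = e a b' := by rw [splitDist_same (by tauto)]; ring
    have Eaa1 : e a a' - μ * splitDist A a a' = e a a' - μ := by rw [splitDist_diff (by tauto)]; ring
    have Ebb1 : e b b' - μ * splitDist A b b' = e b b' - μ := by rw [splitDist_diff (by tauto)]; ring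
    have hC : ¬ CrossQ A a a' b b' := by simp [CrossQ, ha, ha', hb, hb']
    simp only [betaIdx]
    rw [Eab, Ea1b1, Ea1b, Eab1, Eaa1, Ebb1, if_neg hC]
    rw [show e a b - μ + (e a' b' - μ) = e a b + e a' b' - 2 * μ from by ring,
    show e a a' - μ + (e b b' - μ) = e a a' + e b b' - 2 * μ from by ring]
    have hq := isol_le e (B := Aᶜ) ha hb' (show a' ∈ Aᶜ from ha') (show b ∈ Aᶜ from hb)
    rw [← hal] at hq
    unfold betaIdx at hq
    rw [hsym b' b, hsym b' a'] at hq
    have hex : (e a b' + e a' b) + 2 * al ≤ (e a a' + e b b') ∨ (e a b' + e a' b) + 2 * al ≤ (e a' b' + e a b) :=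
      max3_extract (by linarith) (by linarith)
    have hm1 : (e a b + e a' b') ≤ max (e a b + e a' b') (e a a' + e b b') := le_max_left _ _
    have hm2 : (e a a' + e b b') ≤ max (e a b + e a' b') (e a a' + e b b') := le_max_right _ _
    have h1 : (e a' b + e a b') + 2 * μ ≤ max (e a b + e a' b') (e a a' + e b b') := by rcases hex with h|h <;> linarith
    have h2 : (e a' b + e a b') ≤ max (e a b + e a' b') (e a a' + e b b') := by rcases hex with h|h <;> linarith
    have hD := Ldiag2 (x := e a b + e a' b') (y := e a' b + e a b') (z := e a a' + e b b') (μ := μ) h1 h2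
    linarith [hD]
  · -- case (True, False, False, False)
    have Eab : e a b - μ * splitDist A a b = e a b - μ := by rw [splitDist_diff (by tauto)]; ring
    have Ea1b1 : e a' b' - μ * splitDist A a' b' = e a' b' := by rw [splitDist_same (by tauto)]; ring
    have Ea1b : e a' b - μ * splitDist A a' b = e a' b := by rw [splitDist_same (by tauto)]; ring
    have Eab1 : e a b' - μ * splitDist A a b' = e a b' - μ := by rw [splitDist_diff (by tauto)]; ring
    have Eaa1 : e a a' - μ * splitDist A a a' = e a a' - μ := by rw [splitDist_diff (by tauto)]; ring
    have Ebb1 : e b b' - μ * splitDist A b b' = e b b' := by rw [splitDist_same (by tauto)]; ring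
    have hC : ¬ CrossQ A a a' b b' := by simp [CrossQ, ha, ha', hb, hb']
    simp only [betaIdx]
    rw [Eab, Ea1b1, Ea1b, Eab1, Eaa1, Ebb1, if_neg hC]
    rw [show e a b - μ + e a' b' = e a b + e a' b' - μ from by ring,
    show e a' b + (e a b' - μ) = e a' b + e a b' - μ from by ring,
    show e a a' - μ + e b b' = e a a' + e b b' - μ from by ring]
    rw [Lshift (e a b + e a' b') (e a' b + e a b') (e a a' + e b b') μ]
    ring
  · -- case (False, True, True, True)
    have Eab : e a b - μ * splitDist A a b = e a b - μ := by rw [splitDist_diff (by tauto)]; ring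
    have Ea1b1 : e a' b' - μ * splitDist A a' b' = e a' b' := by rw [splitDist_same (by tauto)]; ring
    have Ea1b : e a' b - μ * splitDist A a' b = e a' b := by rw [splitDist_same (by tauto)]; ring
    have Eab1 : e a b' - μ * splitDist A a b' = e a b' - μ := by rw [splitDist_diff (by tauto)]; ring
    have Eaa1 : e a a' - μ * splitDist A a a' = e a a' - μ := by rw [splitDist_diff (by tauto)]; ring
    have Ebb1 : e b b' - μ * splitDist A b b' = e b b' := by rw [splitDist_same (by tauto)]; ring
    have hC : ¬ CrossQ A a a' b b' := by simp [CrossQ, ha, ha', hb, hb']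
    simp only [betaIdx]
    rw [Eab, Ea1b1, Ea1b, Eab1, Eaa1, Ebb1, if_neg hC]
    rw [show e a b - μ + e a' b' = e a b + e a' b' - μ from by ring,
    show e a' b + (e a b' - μ) = e a' b + e a b' - μ from by ring,
    show e a a' - μ + e b b' = e a a' + e b b' - μ from by ring]
    rw [Lshift (e a b + e a' b') (e a' b + e a b') (e a a' + e b b') μ]
    ring
  · -- case (False, True, True, False)
    have Eab : e a b - μ * splitDist A a b = e a b - μ := by rw [splitDist_diff (by tauto)]; ring
    have Ea1b1 : e a' b' - μ * splitDist A a' b' = e a' b' - μ := by rw [splitDist_diff (by tauto)]; ring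
    have Ea1b : e a' b - μ * splitDist A a' b = e a' b := by rw [splitDist_same (by tauto)]; ring
    have Eab1 : e a b' - μ * splitDist A a b' = e a b' := by rw [splitDist_same (by tauto)]; ring
    have Eaa1 : e a a' - μ * splitDist A a a' = e a a' - μ := by rw [splitDist_diff (by tauto)]; ring
    have Ebb1 : e b b' - μ * splitDist A b b' = e b b' - μ := by rw [splitDist_diff (by tauto)]; ring
    have hC : ¬ CrossQ A a a' b b' := by simp [CrossQ, ha, ha', hb, hb']
    simp only [betaIdx]
    rw [Eab, Ea1b1, Ea1b, Eab1, Eaa1, Ebb1, if_neg hC]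
    rw [show e a b - μ + (e a' b' - μ) = e a b + e a' b' - 2 * μ from by ring,
    show e a a' - μ + (e b b' - μ) = e a a' + e b b' - 2 * μ from by ring]
    have hq := isol_le e (B := Aᶜ) ha' hb (show a ∈ Aᶜ from ha) (show b' ∈ Aᶜ from hb')
    rw [← hal] at hq
    unfold betaIdx at hq
    rw [hsym a' a, hsym b a] at hq
    have hex : (e a' b + e a b') + 2 * al ≤ (e a a' + e b b') ∨ (e a' b + e a b') + 2 * al ≤ (e a b + e a' b') :=
      max3_extract (by linarith) (by linarith)
    have hm1 : (e a b + e a' b') ≤ max (e a b + e a' b') (e a a' + e b b') := le_max_left _ _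
    have hm2 : (e a a' + e b b') ≤ max (e a b + e a' b') (e a a' + e b b') := le_max_right _ _
    have h1 : (e a' b + e a b') + 2 * μ ≤ max (e a b + e a' b') (e a a' + e b b') := by rcases hex with h|h <;> linarith
    have h2 : (e a' b + e a b') ≤ max (e a b + e a' b') (e a a' + e b b') := by rcases hex with h|h <;> linarith
    have hD := Ldiag2 (x := e a b + e a' b') (y := e a' b + e a b') (z := e a a' + e b b') (μ := μ) h1 h2
    linarith [hD]
  · -- case (False, True, False, True)
    have Eab : e a b - μ * splitDist A a b = e a b := by rw [splitDist_same (by tauto)]; ring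
    have Ea1b1 : e a' b' - μ * splitDist A a' b' = e a' b' := by rw [splitDist_same (by tauto)]; ring
    have Ea1b : e a' b - μ * splitDist A a' b = e a' b - μ := by rw [splitDist_diff (by tauto)]; ring
    have Eab1 : e a b' - μ * splitDist A a b' = e a b' - μ := by rw [splitDist_diff (by tauto)]; ring
    have Eaa1 : e a a' - μ * splitDist A a a' = e a a' - μ := by rw [splitDist_diff (by tauto)]; ring
    have Ebb1 : e b b' - μ * splitDist A b b' = e b b' - μ := by rw [splitDist_diff (by tauto)]; ring
    have hC : ¬ CrossQ A a a' b b' := by simp [CrossQ, ha, ha', hb, hb']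
    simp only [betaIdx]
    rw [Eab, Ea1b1, Ea1b, Eab1, Eaa1, Ebb1, if_neg hC]
    rw [show e a' b - μ + (e a b' - μ) = e a' b + e a b' - 2 * μ from by ring,
    show e a a' - μ + (e b b' - μ) = e a a' + e b b' - 2 * μ from by ring]
    have hq := isol_le e (B := Aᶜ) ha' hb' (show a ∈ Aᶜ from ha) (show b ∈ Aᶜ from hb)
    rw [← hal] at hq
    unfold betaIdx at hq
    rw [hsym a' a, hsym b' b, hsym b' a] at hq
    have hex : (e a' b' + e a b) + 2 * al ≤ (e a a' + e b b') ∨ (e a' b' + e a b) + 2 * al ≤ (e a b' + e a' b) :=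
      max3_extract (by linarith) (by linarith)
    have hm1 : (e a' b + e a b') ≤ max (e a' b + e a b') (e a a' + e b b') := le_max_left _ _
    have hm2 : (e a a' + e b b') ≤ max (e a' b + e a b') (e a a' + e b b') := le_max_right _ _
    have h1 : (e a b + e a' b') + 2 * μ ≤ max (e a' b + e a b') (e a a' + e b b') := by rcases hex with h|h <;> linarith
    have h2 : (e a b + e a' b') ≤ max (e a' b + e a b') (e a a' + e b b') := by rcases hex with h|h <;> linarith
    have hD := Ldiag1 (x := e a b + e a' b') (y := e a' b + e a b') (z := e a a' + e b b') (μ := μ) h1 h2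
    linarith [hD]
  · -- case (False, True, False, False)
    have Eab : e a b - μ * splitDist A a b = e a b := by rw [splitDist_same (by tauto)]; ring
    have Ea1b1 : e a' b' - μ * splitDist A a' b' = e a' b' - μ := by rw [splitDist_diff (by tauto)]; ring
    have Ea1b : e a' b - μ * splitDist A a' b = e a' b - μ := by rw [splitDist_diff (by tauto)]; ring
    have Eab1 : e a b' - μ * splitDist A a b' = e a b' := by rw [splitDist_same (by tauto)]; ring
    have Eaa1 : e a a' - μ * splitDist A a a' = e a a' - μ := by rw [splitDist_diff (by tauto)]; ring
    have Ebb1 : e b b' - μ * splitDist A b b' = e b b' := by rw [splitDist_same (by tauto)]; ring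
    have hC : ¬ CrossQ A a a' b b' := by simp [CrossQ, ha, ha', hb, hb']
    simp only [betaIdx]
    rw [Eab, Ea1b1, Ea1b, Eab1, Eaa1, Ebb1, if_neg hC]
    rw [show e a b + (e a' b' - μ) = e a b + e a' b' - μ from by ring,
    show e a' b - μ + e a b' = e a' b + e a b' - μ from by ring,
    show e a a' - μ + e b b' = e a a' + e b b' - μ from by ring]
    rw [Lshift (e a b + e a' b') (e a' b + e a b') (e a a' + e b b') μ]
    ring
  · -- case (False, False, True, True)
    have Eab : e a b - μ * splitDist A a b = e a b - μ := by rw [splitDist_diff (by tauto)]; ring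
    have Ea1b1 : e a' b' - μ * splitDist A a' b' = e a' b' - μ := by rw [splitDist_diff (by tauto)]; ring
    have Ea1b : e a' b - μ * splitDist A a' b = e a' b - μ := by rw [splitDist_diff (by tauto)]; ring
    have Eab1 : e a b' - μ * splitDist A a b' = e a b' - μ := by rw [splitDist_diff (by tauto)]; ring
    have Eaa1 : e a a' - μ * splitDist A a a' = e a a' := by rw [splitDist_same (by tauto)]; ring
    have Ebb1 : e b b' - μ * splitDist A b b' = e b b' := by rw [splitDist_same (by tauto)]; ring
    have hC : CrossQ A a a' b b' := by simp [CrossQ, ha, ha', hb, hb']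
    simp only [betaIdx]
    rw [Eab, Ea1b1, Ea1b, Eab1, Eaa1, Ebb1, if_pos hC]
    rw [show e a b - μ + (e a' b' - μ) = e a b + e a' b' - 2 * μ from by ring,
    show e a' b - μ + (e a b' - μ) = e a' b + e a b' - 2 * μ from by ring]
    have hq0 := isol_le e (B := Aᶜ) hb hb' (show a ∈ Aᶜ from ha) (show a' ∈ Aᶜ from ha')
    have hq : al ≤ betaIdx e a a' b b' := by rw [← beta_swap e hsym]; exact hq0
    unfold betaIdx at hq
    have hex : (e a a' + e b b') + 2 * al ≤ (e a b + e a' b') ∨ (e a a' + e b b') + 2 * al ≤ (e a' b + e a b') :=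
      max3_extract (by linarith) (by linarith)
    have hm1 : (e a b + e a' b') ≤ max (e a b + e a' b') (e a' b + e a b') := le_max_left _ _
    have hm2 : (e a' b + e a b') ≤ max (e a b + e a' b') (e a' b + e a b') := le_max_right _ _
    have h0 : (e a a' + e b b') ≤ max (e a b + e a' b') (e a' b + e a b') := by rcases hex with h|h <;> linarith
    have h1 : (e a a' + e b b') + 2 * μ ≤ max (e a b + e a' b') (e a' b + e a b') := by rcases hex with h|h <;> linarith
    rw [Lcross h0 h1]
    ring
  · -- case (False, False, True, False)
    have Eab : e a b - μ * splitDist A a b = e a b - μ := by rw [splitDist_diff (by tauto)]; ring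
    have Ea1b1 : e a' b' - μ * splitDist A a' b' = e a' b' := by rw [splitDist_same (by tauto)]; ring
    have Ea1b : e a' b - μ * splitDist A a' b = e a' b - μ := by rw [splitDist_diff (by tauto)]; ring
    have Eab1 : e a b' - μ * splitDist A a b' = e a b' := by rw [splitDist_same (by tauto)]; ring
    have Eaa1 : e a a' - μ * splitDist A a a' = e a a' := by rw [splitDist_same (by tauto)]; ring
    have Ebb1 : e b b' - μ * splitDist A b b' = e b b' - μ := by rw [splitDist_diff (by tauto)]; ring
    have hC : ¬ CrossQ A a a' b b' := by simp [CrossQ, ha, ha', hb, hb']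
    simp only [betaIdx]
    rw [Eab, Ea1b1, Ea1b, Eab1, Eaa1, Ebb1, if_neg hC]
    rw [show e a b - μ + e a' b' = e a b + e a' b' - μ from by ring,
    show e a' b - μ + e a b' = e a' b + e a b' - μ from by ring,
    show e a a' + (e b b' - μ) = e a a' + e b b' - μ from by ring]
    rw [Lshift (e a b + e a' b') (e a' b + e a b') (e a a' + e b b') μ]
    ring
  · -- case (False, False, False, True)
    have Eab : e a b - μ * splitDist A a b = e a b := by rw [splitDist_same (by tauto)]; ring
    have Ea1b1 : e a' b' - μ * splitDist A a' b' = e a' b' - μ := by rw [splitDist_diff (by tauto)]; ring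
    have Ea1b : e a' b - μ * splitDist A a' b = e a' b := by rw [splitDist_same (by tauto)]; ring
    have Eab1 : e a b' - μ * splitDist A a b' = e a b' - μ := by rw [splitDist_diff (by tauto)]; ring
    have Eaa1 : e a a' - μ * splitDist A a a' = e a a' := by rw [splitDist_same (by tauto)]; ring
    have Ebb1 : e b b' - μ * splitDist A b b' = e b b' - μ := by rw [splitDist_diff (by tauto)]; ring
    have hC : ¬ CrossQ A a a' b b' := by simp [CrossQ, ha, ha', hb, hb']
    simp only [betaIdx]
    rw [Eab, Ea1b1, Ea1b, Eab1, Eaa1, Ebb1, if_neg hC]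
    rw [show e a b + (e a' b' - μ) = e a b + e a' b' - μ from by ring,
    show e a' b + (e a b' - μ) = e a' b + e a b' - μ from by ring,
    show e a a' + (e b b' - μ) = e a a' + e b b' - μ from by ring]
    rw [Lshift (e a b + e a' b') (e a' b + e a b') (e a a' + e b b') μ]
    ring
  · -- case (False, False, False, False)
    have Eab : e a b - μ * splitDist A a b = e a b := by rw [splitDist_same (by tauto)]; ring
    have Ea1b1 : e a' b' - μ * splitDist A a' b' = e a' b' := by rw [splitDist_same (by tauto)]; ring
    have Ea1b : e a' b - μ * splitDist A a' b = e a' b := by rw [splitDist_same (by tauto)]; ring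
    have Eab1 : e a b' - μ * splitDist A a b' = e a b' := by rw [splitDist_same (by tauto)]; ring
    have Eaa1 : e a a' - μ * splitDist A a a' = e a a' := by rw [splitDist_same (by tauto)]; ring
    have Ebb1 : e b b' - μ * splitDist A b b' = e b b' := by rw [splitDist_same (by tauto)]; ring
    have hC : ¬ CrossQ A a a' b b' := by simp [CrossQ, ha, ha', hb, hb']
    simp only [betaIdx]
    rw [Eab, Ea1b1, Ea1b, Eab1, Eaa1, Ebb1, if_neg hC]
    ring
/-! ### splitDist symmetry -/

lemma splitDist_symm (A : Set X) (x y : X) : splitDist A x y = splitDist A y x := by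
  by_cases h : x ∈ A ↔ y ∈ A
  · rw [splitDist_same h, splitDist_same h.symm]
  · rw [splitDist_diff h, splitDist_diff (fun h' => h h'.symm)]

/-! ### One-split subtraction: pseudometric -/

lemma pseudo_lemma (e : X → X → ℝ) (he : IsPseudometric e) (A : Set X)
    (hpos : 0 < isolIdx e A Aᶜ) {μ : ℝ} (hμ : μ ≤ isolIdx e A Aᶜ) :
    IsPseudometric (fun u v => e u v - μ * splitDist A u v) := by
  obtain ⟨hrefl, hsym, htri⟩ := he
  refine ⟨?_, ?_, ?_⟩
  · intro x; simp [splitDist_same Iff.rfl, hrefl x]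
  · intro x y; simp only [splitDist_symm A x y, hsym x y]
  · intro x y z
    simp only
    by_cases hx : x ∈ A <;> by_cases hy : y ∈ A <;> by_cases hz : z ∈ A
    -- (T,T,T)
    · rw [splitDist_same (by tauto), splitDist_same (by tauto), splitDist_same (by tauto)]
      have := htri x y z; linarith
    -- (T,T,F)
    · rw [splitDist_diff (by tauto), splitDist_same (by tauto), splitDist_diff (by tauto)]
      have := htri x y z; linarith
    -- (T,F,T) : hard case, x z ∈ A, y ∉ A
    · rw [splitDist_same (by tauto), splitDist_diff (by tauto), splitDist_diff (by tauto)]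
      have hq := isol_le e (B := Aᶜ) hx hz (show y ∈ Aᶜ from hy) (show y ∈ Aᶜ from hy)
      unfold betaIdx at hq
      rw [hrefl y] at hq
      rcases le_or_gt μ 0 with hneg | hpos'
      · have := htri x y z; linarith
      · have hex : e x z + 0 + 2 * isolIdx e A Aᶜ ≤ e x y + e z y ∨
            e x z + 0 + 2 * isolIdx e A Aᶜ ≤ e z y + e x y :=
          max3_extract (by linarith) (by linarith)
        have hsz := hsym z y
        rcases hex with h | h <;> linarith
    -- (T,F,F)
    · rw [splitDist_diff (by tauto), splitDist_diff (by tauto), splitDist_same (by tauto)]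
      have := htri x y z; linarith
    -- (F,T,T)
    · rw [splitDist_diff (by tauto), splitDist_diff (by tauto), splitDist_same (by tauto)]
      have := htri x y z; linarith
    -- (F,T,F) : hard case, x z ∉ A, y ∈ A
    · rw [splitDist_same (by tauto), splitDist_diff (by tauto), splitDist_diff (by tauto)]
      have hq := isol_le e (B := Aᶜ) hy hy (show x ∈ Aᶜ from hx) (show z ∈ Aᶜ from hz)
      unfold betaIdx at hq
      rw [hrefl y] at hq
      rcases le_or_gt μ 0 with hneg | hpos'
      · have := htri x y z; linarith
      · have hex : 0 + e x z + 2 * isolIdx e A Aᶜ ≤ e y x + e y z ∨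
            0 + e x z + 2 * isolIdx e A Aᶜ ≤ e y x + e y z :=
          max3_extract (by linarith) (by linarith)
        have hsx := hsym y x
        rcases hex with h | h <;> linarith
    -- (F,F,T)
    · rw [splitDist_diff (by tauto), splitDist_same (by tauto), splitDist_diff (by tauto)]
      have := htri x y z; linarith
    -- (F,F,F)
    · rw [splitDist_same (by tauto), splitDist_same (by tauto), splitDist_same (by tauto)]
      have := htri x y z; linarith

/-! ### One-split subtraction: index shift for the split itself -/

lemma shift_lemma (e : X → X → ℝ) (hsym : ∀ x y, e x y = e y x) (A : Set X)
    (hsplit : IsSplit A Aᶜ) (hpos : 0 < isolIdx e A Aᶜ) {μ : ℝ} (hμ : μ ≤ isolIdx e A Aᶜ) :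
    isolIdx (fun u v => e u v - μ * splitDist A u v) A Aᶜ = isolIdx e A Aᶜ - μ := by
  obtain ⟨⟨hAne, hAcne, _⟩, _⟩ := hsplit
  apply le_antisymm
  · apply le_of_forall_pos_le_add
    intro ε hε
    obtain ⟨r, ⟨a, ha, a', ha', b, hb, b', hb', rfl⟩, hrlt⟩ :=
      exists_lt_of_csInf_lt (s := {r : ℝ | ∃ a ∈ A, ∃ a' ∈ A, ∃ b ∈ Aᶜ, ∃ b' ∈ Aᶜ, r = betaIdx e a a' b b'})
        (by obtain ⟨a, ha⟩ := hAne; obtain ⟨b, hb⟩ := hAcne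
            exact ⟨_, ⟨a, ha, a, ha, b, hb, b, hb, rfl⟩⟩)
        (show isolIdx e A Aᶜ < isolIdx e A Aᶜ + ε by linarith)
    have hcross : CrossQ A a a' b b' := Or.inl ⟨ha, ha', hb, hb'⟩
    have hpt := point_lemma e hsym A hpos hμ a a' b b'
    rw [if_pos hcross] at hpt
    have hmem := isol_le (fun u v => e u v - μ * splitDist A u v) ha ha' hb hb'
    rw [hpt] at hmem
    linarith
  · apply le_csInf
    · obtain ⟨a, ha⟩ := hAne; obtain ⟨b, hb⟩ := hAcne
      exact ⟨_, ⟨a, ha, a, ha, b, hb, b, hb, rfl⟩⟩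
    · rintro r ⟨a, ha, a', ha', b, hb, b', hb', rfl⟩
      have hcross : CrossQ A a a' b b' := Or.inl ⟨ha, ha', hb, hb'⟩
      have hpt := point_lemma e hsym A hpos hμ a a' b b'
      rw [if_pos hcross] at hpt
      rw [hpt]
      have := isol_le e ha ha' hb hb'
      linarith

/-! ### One-split subtraction: other splits' indices do not decrease -/

lemma ge_lemma (e : X → X → ℝ) (hsym : ∀ x y, e x y = e y x) (A : Set X)
    (hpos : 0 < isolIdx e A Aᶜ) {μ : ℝ} (hμ : μ ≤ isolIdx e A Aᶜ)
    (C : Set X) (hCsplit : IsSplit C Cᶜ) (h1 : C ≠ A) (h2 : C ≠ Aᶜ) :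
    isolIdx e C Cᶜ ≤ isolIdx (fun u v => e u v - μ * splitDist A u v) C Cᶜ := by
  obtain ⟨⟨hCne, hCcne, _⟩, _⟩ := hCsplit
  apply le_csInf
  · obtain ⟨a, ha⟩ := hCne; obtain ⟨b, hb⟩ := hCcne
    exact ⟨_, ⟨a, ha, a, ha, b, hb, b, hb, rfl⟩⟩
  · rintro r ⟨a, ha, a', ha', b, hb, b', hb', rfl⟩
    have hpt := point_lemma e hsym A hpos hμ a a' b b'
    rw [hpt]
    by_cases hcross : CrossQ A a a' b b'
    · rw [if_pos hcross]
      rcases hcross with ⟨haA, ha'A, hbA, hb'A⟩ | ⟨haA, ha'A, hbA, hb'A⟩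
      · have := claimA e (A := A) (C := C) (fun h => h1 h.symm)
          haA ha'A hbA hb'A ha ha' hb hb'
        linarith
      · have hAA : isolIdx e Aᶜ Aᶜᶜ = isolIdx e A Aᶜ := by
          rw [compl_compl]; exact isol_symm e hsym Aᶜ A
        have := claimA e (A := Aᶜ) (C := C) (fun h => h2 h.symm)
          haA ha'A (by simp [hbA]) (by simp [hb'A]) ha ha' hb hb'
        rw [hAA] at this
        linarith
    · rw [if_neg hcross]
      have := isol_le e ha ha' hb hb'
      linarith

/-! ### Lipschitz comparison of isolation indices -/

lemma beta_blip {e₁ e₂ : X → X → ℝ} {c : ℝ} (h : ∀ u v, |e₁ u v - e₂ u v| ≤ c)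
    (a a' b b' : X) : betaIdx e₁ a a' b b' ≤ betaIdx e₂ a a' b b' + 2 * c := by
  have h1 := abs_le.mp (h a b); have h2 := abs_le.mp (h a' b')
  have h3 := abs_le.mp (h a' b); have h4 := abs_le.mp (h a b')
  have h5 := abs_le.mp (h a a'); have h6 := abs_le.mp (h b b')
  unfold betaIdx
  have hm1 : e₂ a b + e₂ a' b' ≤ max (max (e₂ a b + e₂ a' b') (e₂ a' b + e₂ a b')) (e₂ a a' + e₂ b b') :=
    le_trans (le_max_left _ _) (le_max_left _ _)
  have hm2 : e₂ a' b + e₂ a b' ≤ max (max (e₂ a b + e₂ a' b') (e₂ a' b + e₂ a b')) (e₂ a a' + e₂ b b') :=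
    le_trans (le_max_right _ _) (le_max_left _ _)
  have hm3 : e₂ a a' + e₂ b b' ≤ max (max (e₂ a b + e₂ a' b') (e₂ a' b + e₂ a b')) (e₂ a a' + e₂ b b') :=
    le_max_right _ _
  have H : max (max (e₁ a b + e₁ a' b') (e₁ a' b + e₁ a b')) (e₁ a a' + e₁ b b') ≤
      max (max (e₂ a b + e₂ a' b') (e₂ a' b + e₂ a b')) (e₂ a a' + e₂ b b') + 2 * c :=
    max_le (max_le (by linarith) (by linarith)) (by linarith)
  linarith

lemma isol_blip {e₁ e₂ : X → X → ℝ} {c : ℝ} (h : ∀ u v, |e₁ u v - e₂ u v| ≤ c)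
    {C D : Set X} (hC : C.Nonempty) (hD : D.Nonempty) :
    isolIdx e₁ C D ≤ isolIdx e₂ C D + 2 * c := by
  rw [← sub_le_iff_le_add]
  apply le_csInf
  · obtain ⟨a, ha⟩ := hC; obtain ⟨b, hb⟩ := hD
    exact ⟨_, ⟨a, ha, a, ha, b, hb, b, hb, rfl⟩⟩
  · rintro r ⟨a, ha, a', ha', b, hb, b', hb', rfl⟩
    have h1 := isol_le e₁ ha ha' hb hb'
    have h2 := beta_blip h a a' b b'
    linarith

/-! ### One-split subtraction: invariance of other splits' indices -/

lemma eq_lemma (e : X → X → ℝ) (he : IsPseudometric e) (A : Set X)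
    (hAsplit : IsSplit A Aᶜ)
    (hpos : 0 < isolIdx e A Aᶜ) {μ : ℝ} (hμ : μ ≤ isolIdx e A Aᶜ)
    (C : Set X) (hCsplit : IsSplit C Cᶜ) (h1 : C ≠ A) (h2 : C ≠ Aᶜ) :
    isolIdx (fun u v => e u v - μ * splitDist A u v) C Cᶜ = isolIdx e C Cᶜ := by
  have hsym := he.2.1
  apply le_antisymm
  · apply le_of_forall_pos_le_add
    intro ε hε
    have hμ2 : μ - ε/4 ≤ isolIdx e A Aᶜ := by linarith
    have hshift := shift_lemma e hsym A hAsplit hpos hμ2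
    have hpos'' : 0 < isolIdx (fun u v => e u v - (μ - ε/4) * splitDist A u v) A Aᶜ := by
      rw [hshift]; linarith
    have hsym'' : ∀ x y, e x y - (μ - ε/4) * splitDist A x y
        = e y x - (μ - ε/4) * splitDist A y x := by
      intro x y; rw [hsym x y, splitDist_symm A x y]
    have hrevμ : -(μ - ε/4) ≤ isolIdx (fun u v => e u v - (μ - ε/4) * splitDist A u v) A Aᶜ := by
      rw [hshift]
      have := isol_nonneg e A Aᶜ
      linarith
    have hge := ge_lemma e hsym A hpos hμ2 C hCsplit h1 h2
    have hrev := ge_lemma (fun u v => e u v - (μ - ε/4) * splitDist A u v) hsym'' A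
      hpos'' hrevμ C hCsplit h1 h2
    have hfun : (fun u v => (e u v - (μ - ε/4) * splitDist A u v)
        - (-(μ - ε/4)) * splitDist A u v) = e := by
      funext u v; ring
    rw [hfun] at hrev
    have heq'' : isolIdx (fun u v => e u v - (μ - ε/4) * splitDist A u v) C Cᶜ
        = isolIdx e C Cᶜ := le_antisymm hrev hge
    obtain ⟨⟨hCne, hCcne, _⟩, _⟩ := hCsplit
    have hblip : ∀ u v, |(e u v - μ * splitDist A u v)
        - (e u v - (μ - ε/4) * splitDist A u v)| ≤ ε/4 := by
      intro u v
      have harr : (e u v - μ * splitDist A u v) - (e u v - (μ - ε/4) * splitDist A u v)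
          = -(ε/4) * splitDist A u v := by ring
      rw [harr]
      by_cases hsep : u ∈ A ↔ v ∈ A
      · rw [splitDist_same hsep]; simp; positivity
      · rw [splitDist_diff hsep]; rw [abs_le]; constructor <;> [linarith; linarith]
    have hlip := isol_blip hblip hCne hCcne
    rw [heq''] at hlip
    linarith
  · exact ge_lemma e hsym A hpos hμ C hCsplit h1 h2
/-! ### Nonnegativity of pseudometrics -/

lemma pm_nonneg {e : X → X → ℝ} (he : IsPseudometric e) (x y : X) : 0 ≤ e x y := by
  have h1 := he.1 x
  have h2 := he.2.1 y x
  have h3 := he.2.2 x y x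
  linarith

/-! ### Iterated subtraction over a finite set of splits -/

open Classical in
lemma iter_lemma (d : X → X → ℝ) (hd : IsPseudometric d) (lam : Set X → ℝ)
    (F : Finset (Set X))
    (hsplit : ∀ A ∈ F, IsSplit A Aᶜ) (hpos : ∀ A ∈ F, 0 < isolIdx d A Aᶜ)
    (hclean : ∀ A ∈ F, Aᶜ ∉ F) (hle : ∀ A ∈ F, lam A ≤ isolIdx d A Aᶜ) :
    IsPseudometric (fun u v => d u v - ∑ A ∈ F, lam A * splitDist A u v)
    ∧ (∀ C : Set X, IsSplit C Cᶜ →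
        isolIdx (fun u v => d u v - ∑ A ∈ F, lam A * splitDist A u v) C Cᶜ
          = isolIdx d C Cᶜ - ∑ A ∈ F.filter (fun A' => A' = C ∨ A' = Cᶜ), lam A)
    ∧ (∀ a a' b b' : X,
        betaIdx (fun u v => d u v - ∑ A ∈ F, lam A * splitDist A u v) a a' b b'
          = betaIdx d a a' b b' - ∑ A ∈ F.filter (fun A' => CrossQ A' a a' b b'), lam A) := by
  classical
  induction F using Finset.induction_on with
  | empty =>
    refine ⟨?_, ?_, ?_⟩
    · simpa using hd
    · intro C _; simp
    · intro a a' b b'; simp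
  | @insert B F hB ih =>
    have hsplit' : ∀ A ∈ F, IsSplit A Aᶜ := fun A hA => hsplit A (Finset.mem_insert_of_mem hA)
    have hpos' : ∀ A ∈ F, 0 < isolIdx d A Aᶜ := fun A hA => hpos A (Finset.mem_insert_of_mem hA)
    have hclean' : ∀ A ∈ F, Aᶜ ∉ F := fun A hA hc =>
      hclean A (Finset.mem_insert_of_mem hA) (Finset.mem_insert_of_mem hc)
    have hle' : ∀ A ∈ F, lam A ≤ isolIdx d A Aᶜ := fun A hA => hle A (Finset.mem_insert_of_mem hA)
    obtain ⟨IH1, IH2, IH3⟩ := ih hsplit' hpos' hclean' hle'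
    have hBmem : B ∈ insert B F := Finset.mem_insert_self B F
    have hBsplit := hsplit B hBmem
    have hBcF : Bᶜ ∉ F := fun hc => hclean B hBmem (Finset.mem_insert_of_mem hc)
    -- the filter of F relative to B is empty
    have hfilB : F.filter (fun A' => A' = B ∨ A' = Bᶜ) = ∅ := by
      rw [Finset.filter_eq_empty_iff]
      rintro A hA (rfl | rfl)
      · exact hB hA
      · exact hBcF hA
    have hEB : isolIdx (fun u v => d u v - ∑ A ∈ F, lam A * splitDist A u v) B Bᶜ
        = isolIdx d B Bᶜ := by
      rw [IH2 B hBsplit, hfilB]; simp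
    have hposF : 0 < isolIdx (fun u v => d u v - ∑ A ∈ F, lam A * splitDist A u v) B Bᶜ := by
      rw [hEB]; exact hpos B hBmem
    have hlamF : lam B ≤ isolIdx (fun u v => d u v - ∑ A ∈ F, lam A * splitDist A u v) B Bᶜ := by
      rw [hEB]; exact hle B hBmem
    have hsymF := IH1.2.1
    have hfun : (fun u v => d u v - ∑ A ∈ insert B F, lam A * splitDist A u v)
        = (fun u v => (d u v - ∑ A ∈ F, lam A * splitDist A u v) - lam B * splitDist B u v) := by
      funext u v
      rw [Finset.sum_insert hB]
      ring
    have hpseudo : IsPseudometric (fun u v => d u v - ∑ A ∈ insert B F, lam A * splitDist A u v) := by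
      rw [hfun]
      exact pseudo_lemma _ IH1 B hposF hlamF
    refine ⟨hpseudo, ?_, ?_⟩
    · intro C hC
      by_cases hCB : C = B
      · subst hCB
        rw [hfun, shift_lemma _ hsymF C hBsplit hposF hlamF, hEB]
        have : (insert C F).filter (fun A' => A' = C ∨ A' = Cᶜ) = insert C ∅ := by
          rw [Finset.filter_insert, if_pos (Or.inl rfl), hfilB]
        rw [this]
        simp
      · by_cases hCBc : C = Bᶜ
        · subst hCBc
          have hcc : Bᶜᶜ = B := compl_compl B
          have hsym' := hpseudo.2.1
          have hL : isolIdx (fun u v => d u v - ∑ A ∈ insert B F, lam A * splitDist A u v) Bᶜ Bᶜᶜ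
              = isolIdx (fun u v => d u v - ∑ A ∈ insert B F, lam A * splitDist A u v) B Bᶜ := by
            rw [hcc]; exact isol_symm _ hsym' Bᶜ B
          have hR : isolIdx d Bᶜ Bᶜᶜ = isolIdx d B Bᶜ := by
            rw [hcc]; exact isol_symm d hd.2.1 Bᶜ B
          rw [hL, hR, hfun, shift_lemma _ hsymF B hBsplit hposF hlamF, hEB]
          have hfil2 : (insert B F).filter (fun A' => A' = Bᶜ ∨ A' = Bᶜᶜ) = insert B ∅ := by
            rw [Finset.filter_insert, if_pos (Or.inr hcc.symm)]
            congr 1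
            rw [Finset.filter_eq_empty_iff]
            rintro A hA (rfl | hA2)
            · exact hBcF hA
            · rw [hcc] at hA2; exact hB (hA2 ▸ hA)
          rw [hfil2]
          simp
        · have hne1 : B ≠ C := fun h => hCB h.symm
          have hne2 : B ≠ Cᶜ := by
            intro h
            apply hCBc
            rw [h, compl_compl]
          rw [hfun, eq_lemma _ IH1 B hBsplit hposF hlamF C hC hCB hCBc, IH2 C hC]
          have : (insert B F).filter (fun A' => A' = C ∨ A' = Cᶜ)
              = F.filter (fun A' => A' = C ∨ A' = Cᶜ) := by
            rw [Finset.filter_insert, if_neg]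
            rintro (h | h)
            · exact hne1 h
            · exact hne2 h
          rw [this]
    · intro a a' b b'
      rw [hfun]
      have hpt := point_lemma _ hsymF B hposF hlamF a a' b b'
      rw [hpt, IH3 a a' b b']
      by_cases hcr : CrossQ B a a' b b'
      · rw [if_pos hcr, Finset.filter_insert, if_pos hcr, Finset.sum_insert]
        · ring
        · intro hmem
          exact hB (Finset.mem_of_mem_filter B hmem)
      · rw [if_neg hcr, Finset.filter_insert, if_neg hcr]
        ring

/-! ### Choice of representatives -/

lemma rep_lemma (U : Finset (Set X)) (hne : ∀ A ∈ U, A ≠ Aᶜ) :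
    ∃ F : Finset (Set X), F ⊆ U ∧ (∀ A ∈ U, A ∈ F ∨ Aᶜ ∈ F) ∧ (∀ A ∈ F, Aᶜ ∉ F) := by
  classical
  induction U using Finset.induction_on with
  | empty => exact ⟨∅, Finset.Subset.refl _, by simp, by simp⟩
  | @insert B U hB ih =>
    obtain ⟨F, hsub, hcover, hclean⟩ := ih (fun A hA => hne A (Finset.mem_insert_of_mem hA))
    by_cases hBin : B ∈ F ∨ Bᶜ ∈ F
    · refine ⟨F, fun A hA => Finset.mem_insert_of_mem (hsub hA), ?_, hclean⟩
      intro A hA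
      rcases Finset.mem_insert.mp hA with rfl | hA'
      · exact hBin
      · exact hcover A hA'
    · push_neg at hBin
      refine ⟨insert B F, ?_, ?_, ?_⟩
      · intro A hA
        rcases Finset.mem_insert.mp hA with rfl | hA'
        · exact Finset.mem_insert_self _ _
        · exact Finset.mem_insert_of_mem (hsub hA')
      · intro A hA
        rcases Finset.mem_insert.mp hA with rfl | hA'
        · exact Or.inl (Finset.mem_insert_self _ _)
        · rcases hcover A hA' with h | h
          · exact Or.inl (Finset.mem_insert_of_mem h)
          · exact Or.inr (Finset.mem_insert_of_mem h)
      · intro A hA hAc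
        rcases Finset.mem_insert.mp hA with rfl | hA'
        · rcases Finset.mem_insert.mp hAc with h | h
          · exact hne _ (Finset.mem_insert_self _ _) h.symm
          · exact hBin.2 h
        · rcases Finset.mem_insert.mp hAc with h | h
          · apply hBin.2
            have hABc : Bᶜ = A := by rw [← h, compl_compl]
            rw [hABc]; exact hA'
          · exact hclean A hA' h
/-! ### Half-integrality -/

lemma half_lemma (d : X → X → ℝ) (hint : IsIntegerValued d) {A : Set X}
    (h : IsDSplit d A Aᶜ) : 1/2 ≤ isolIdx d A Aᶜ := by
  obtain ⟨⟨⟨hAne, hAcne, _⟩, _⟩, hpos⟩ := h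
  by_contra hlt
  push_neg at hlt
  obtain ⟨r, ⟨a, ha, a', ha', b, hb, b', hb', rfl⟩, hrlt⟩ :=
    exists_lt_of_csInf_lt
      (s := {r : ℝ | ∃ a ∈ A, ∃ a' ∈ A, ∃ b ∈ Aᶜ, ∃ b' ∈ Aᶜ, r = betaIdx d a a' b b'})
      (by obtain ⟨a, ha⟩ := hAne; obtain ⟨b, hb⟩ := hAcne
          exact ⟨_, ⟨a, ha, a, ha, b, hb, b, hb, rfl⟩⟩) hlt
  obtain ⟨n1, e1⟩ := hint a b
  obtain ⟨n2, e2⟩ := hint a' b'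
  obtain ⟨n3, e3⟩ := hint a' b
  obtain ⟨n4, e4⟩ := hint a b'
  obtain ⟨n5, e5⟩ := hint a a'
  obtain ⟨n6, e6⟩ := hint b b'
  have h2r : 2 * betaIdx d a a' b b' = ((max (max (n1 + n2) (n3 + n4)) (n5 + n6) - n5 - n6 : ℤ) : ℝ) := by
    unfold betaIdx
    rw [e1, e2, e3, e4, e5, e6]
    push_cast
    ring
  have hge0 := beta_nonneg d a a' b b'
  have hn0 : (max (max (n1 + n2) (n3 + n4)) (n5 + n6) - n5 - n6 : ℤ) = 0 := by
    have hl : (0:ℝ) ≤ ((max (max (n1 + n2) (n3 + n4)) (n5 + n6) - n5 - n6 : ℤ) : ℝ) := by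
      rw [← h2r]; linarith
    have hu : ((max (max (n1 + n2) (n3 + n4)) (n5 + n6) - n5 - n6 : ℤ) : ℝ) < 1 := by
      rw [← h2r]; linarith
    have hl' : (0:ℤ) ≤ max (max (n1 + n2) (n3 + n4)) (n5 + n6) - n5 - n6 := by exact_mod_cast hl
    have hu' : (max (max (n1 + n2) (n3 + n4)) (n5 + n6) - n5 - n6 : ℤ) < 1 := by exact_mod_cast hu
    omega
  have hbeta0 : betaIdx d a a' b b' = 0 := by
    rw [hn0] at h2r
    simpa using h2r
  have := isol_le d ha ha' hb hb'
  rw [hbeta0] at this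
  linarith

/-! ### Finiteness of separating d-splits -/

lemma sep_finite (d : X → X → ℝ) (hd : IsPseudometric d) (hint : IsIntegerValued d)
    (x y : X) : {A : Set X | IsDSplit d A Aᶜ ∧ x ∈ A ∧ y ∉ A}.Finite := by
  classical
  by_contra hinf
  have hinf' : {A : Set X | IsDSplit d A Aᶜ ∧ x ∈ A ∧ y ∉ A}.Infinite := hinf
  obtain ⟨F, hFsub, hFcard⟩ := hinf'.exists_subset_card_eq (⌈2 * d x y⌉₊ + 1)
  have hmem : ∀ A ∈ F, IsDSplit d A Aᶜ ∧ x ∈ A ∧ y ∉ A := fun A hA => hFsub hA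
  have hiter := iter_lemma d hd (fun A => isolIdx d A Aᶜ) F
    (fun A hA => (hmem A hA).1.1)
    (fun A hA => (hmem A hA).1.2)
    (fun A hA hc => ((hmem Aᶜ hc).2.1 : x ∈ Aᶜ) ((hmem A hA).2.1))
    (fun A hA => le_refl _)
  have hnn := pm_nonneg hiter.1 x y
  have hsum : ∑ A ∈ F, isolIdx d A Aᶜ * splitDist A x y = ∑ A ∈ F, isolIdx d A Aᶜ := by
    apply Finset.sum_congr rfl
    intro A hA
    rw [splitDist_diff (by have := (hmem A hA).2; tauto), mul_one]
  rw [hsum] at hnn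
  have hlow : ∀ A ∈ F, 1/2 ≤ isolIdx d A Aᶜ := fun A hA => half_lemma d hint (hmem A hA).1
  have hcard := Finset.card_nsmul_le_sum F (fun A => isolIdx d A Aᶜ) (1/2) hlow
  rw [hFcard, nsmul_eq_mul] at hcard
  push_cast at hcard
  have hceil : 2 * d x y ≤ (⌈2 * d x y⌉₊ : ℝ) := Nat.le_ceil _
  linarith

theorem statement5 (d : X → X → ℝ) (hd : IsPseudometric d) (hint : IsIntegerValued d)
    (lam : Set X → ℝ)
    (hsymm : ∀ A : Set X, lam A = lam Aᶜ)
    (hle : ∀ A : Set X, IsDSplit d A Aᶜ → lam A ≤ isolIdx d A Aᶜ)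
    (hzero : ∀ A : Set X, IsSplit A Aᶜ → ¬ IsDSplit d A Aᶜ → lam A = 0)
    (dt : X → X → ℝ)
    (hdt : ∀ x y, dt x y
      = d x y - ∑ᶠ A ∈ {A : Set X | IsDSplit d A Aᶜ ∧ x ∈ A ∧ y ∉ A}, lam A) :
    (∀ x y : X, {A : Set X | IsDSplit d A Aᶜ ∧ x ∈ A ∧ y ∉ A}.Finite) ∧
      IsPseudometric dt ∧
      ∀ A B : Set X, IsSplit A B → isolIdx dt A B = isolIdx d A B - lam A := by
  classical
  have hfin : ∀ x y : X, {A : Set X | IsDSplit d A Aᶜ ∧ x ∈ A ∧ y ∉ A}.Finite :=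
    sep_finite d hd hint
  have hdsplit_compl : ∀ {B : Set X}, IsDSplit d B Bᶜ → IsDSplit d Bᶜ Bᶜᶜ := by
    rintro B ⟨⟨⟨h1, h2, h3⟩, h4⟩, h5⟩
    refine ⟨⟨⟨h2, by rwa [compl_compl], by rw [compl_compl]; exact h3.symm⟩,
      by rw [compl_compl, Set.union_comm]; exact h4⟩, ?_⟩
    rw [compl_compl, isol_symm d hd.2.1 Bᶜ B] at *
    exact h5
  have hAneAc : ∀ {B : Set X}, IsDSplit d B Bᶜ → B ≠ Bᶜ := by
    rintro B ⟨⟨⟨⟨b, hb⟩, _, _⟩, _⟩, _⟩ heq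
    exact (heq ▸ hb : b ∈ Bᶜ) hb
  have hcover : ∀ U : Finset (Set X), (∀ A ∈ U, IsDSplit d A Aᶜ) →
      ∃ F : Finset (Set X), (∀ A ∈ F, IsDSplit d A Aᶜ) ∧ (∀ A ∈ F, Aᶜ ∉ F) ∧
        (∀ A ∈ U, A ∈ F ∨ Aᶜ ∈ F) := by
    intro U hU
    obtain ⟨F, hsub, hcov, hclean⟩ := rep_lemma U (fun A hA => hAneAc (hU A hA))
    exact ⟨F, fun A hA => hU A (hsub hA), hclean, hcov⟩
  have hdt' : ∀ x y, dt x y = d x y - ∑ A ∈ (hfin x y).toFinset, lam A := by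
    intro x y
    rw [hdt x y, finsum_mem_eq_finite_toFinset_sum _ (hfin x y)]
  have hmatch : ∀ F : Finset (Set X), (∀ A ∈ F, IsDSplit d A Aᶜ) → (∀ A ∈ F, Aᶜ ∉ F) →
      ∀ x y : X, (∀ A : Set X, IsDSplit d A Aᶜ → x ∈ A → y ∉ A → A ∈ F ∨ Aᶜ ∈ F) →
      d x y - ∑ A ∈ F, lam A * splitDist A x y = dt x y := by
    intro F hF1 hF2 x y hFcov
    rw [hdt' x y]
    congr 1
    have step1 : ∑ A ∈ F, lam A * splitDist A x y
        = ∑ A ∈ F.filter (fun A => ¬ (x ∈ A ↔ y ∈ A)), lam A := by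
      rw [Finset.sum_filter]
      apply Finset.sum_congr rfl
      intro A _
      by_cases hsep : x ∈ A ↔ y ∈ A
      · rw [splitDist_same hsep, if_neg (not_not_intro hsep), mul_zero]
      · rw [splitDist_diff hsep, if_pos hsep, mul_one]
    rw [step1]
    apply Finset.sum_nbij' (i := fun A => if x ∈ A then A else Aᶜ)
      (j := fun B => if B ∈ F then B else Bᶜ)
    · intro A hA
      obtain ⟨hAF, hsep⟩ := Finset.mem_filter.mp hA
      show _
      rw [Set.Finite.mem_toFinset]
      by_cases hx : x ∈ A
      · rw [if_pos hx]
        have hy : y ∉ A := fun hy => hsep ⟨fun _ => hy, fun _ => hx⟩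
        exact ⟨hF1 A hAF, hx, hy⟩
      · rw [if_neg hx]
        have hy : y ∈ A := by
          by_contra hy
          exact hsep ⟨fun h => absurd h hx, fun h => absurd h hy⟩
        exact ⟨hdsplit_compl (hF1 A hAF), hx, fun hc => hc hy⟩
    · intro B hB
      rw [Set.Finite.mem_toFinset] at hB
      obtain ⟨hBd, hxB, hyB⟩ := hB
      show _
      by_cases hBF : B ∈ F
      · rw [if_pos hBF]
        exact Finset.mem_filter.mpr ⟨hBF, fun hsep => hyB (hsep.mp hxB)⟩
      · rw [if_neg hBF]
        have hBc : Bᶜ ∈ F := (hFcov B hBd hxB hyB).resolve_left hBF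
        exact Finset.mem_filter.mpr ⟨hBc, fun hsep => (hsep.mpr hyB) hxB⟩
    · intro A hA
      obtain ⟨hAF, _⟩ := Finset.mem_filter.mp hA
      show _
      by_cases hx : x ∈ A
      · rw [if_pos hx, if_pos hAF]
      · rw [if_neg hx, if_neg (hF2 A hAF), compl_compl]
    · intro B hB
      rw [Set.Finite.mem_toFinset] at hB
      obtain ⟨hBd, hxB, hyB⟩ := hB
      show _
      by_cases hBF : B ∈ F
      · rw [if_pos hBF, if_pos hxB]
      · rw [if_neg hBF, if_neg (fun hc : x ∈ Bᶜ => hc hxB), compl_compl]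
    · intro A hA
      show _
      by_cases hx : x ∈ A
      · rw [if_pos hx]
      · rw [if_neg hx]
        exact hsymm A
  -- pseudometric of dt
  have hpseudo : IsPseudometric dt := by
    refine ⟨?_, ?_, ?_⟩
    · intro x
      have hempty : {A : Set X | IsDSplit d A Aᶜ ∧ x ∈ A ∧ x ∉ A} = (∅ : Set (Set X)) := by
        ext A
        simp only [Set.mem_setOf_eq, Set.mem_empty_iff_false, iff_false]
        rintro ⟨_, h1, h2⟩; exact h2 h1
      rw [hdt x x, hempty, finsum_mem_empty, sub_zero, hd.1 x]
    · intro x y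
      obtain ⟨F, hF1, hF2, hFcov⟩ := hcover ((hfin x y).toFinset ∪ (hfin y x).toFinset)
        (by intro A hA
            rcases Finset.mem_union.mp hA with h | h
            · exact ((hfin x y).mem_toFinset.mp h).1
            · exact ((hfin y x).mem_toFinset.mp h).1)
      have covxy : ∀ A : Set X, IsDSplit d A Aᶜ → x ∈ A → y ∉ A → A ∈ F ∨ Aᶜ ∈ F :=
        fun A h1 h2 h3 =>
          hFcov A (Finset.mem_union_left _ ((hfin x y).mem_toFinset.mpr ⟨h1, h2, h3⟩))
      have covyx : ∀ A : Set X, IsDSplit d A Aᶜ → y ∈ A → x ∉ A → A ∈ F ∨ Aᶜ ∈ F :=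
        fun A h1 h2 h3 =>
          hFcov A (Finset.mem_union_right _ ((hfin y x).mem_toFinset.mpr ⟨h1, h2, h3⟩))
      rw [← hmatch F hF1 hF2 x y covxy, ← hmatch F hF1 hF2 y x covyx, hd.2.1 x y]
      congr 1
      apply Finset.sum_congr rfl
      intro A _
      rw [splitDist_symm A x y]
    · intro x y z
      obtain ⟨F, hF1, hF2, hFcov⟩ := hcover
        (((hfin x z).toFinset ∪ (hfin x y).toFinset) ∪ (hfin y z).toFinset)
        (by intro A hA
            rcases Finset.mem_union.mp hA with h | h
            · rcases Finset.mem_union.mp h with h' | h'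
              · exact ((hfin x z).mem_toFinset.mp h').1
              · exact ((hfin x y).mem_toFinset.mp h').1
            · exact ((hfin y z).mem_toFinset.mp h).1)
      have cov1 : ∀ A : Set X, IsDSplit d A Aᶜ → x ∈ A → z ∉ A → A ∈ F ∨ Aᶜ ∈ F :=
        fun A h1 h2 h3 => hFcov A (Finset.mem_union_left _ (Finset.mem_union_left _
          ((hfin x z).mem_toFinset.mpr ⟨h1, h2, h3⟩)))
      have cov2 : ∀ A : Set X, IsDSplit d A Aᶜ → x ∈ A → y ∉ A → A ∈ F ∨ Aᶜ ∈ F :=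
        fun A h1 h2 h3 => hFcov A (Finset.mem_union_left _ (Finset.mem_union_right _
          ((hfin x y).mem_toFinset.mpr ⟨h1, h2, h3⟩)))
      have cov3 : ∀ A : Set X, IsDSplit d A Aᶜ → y ∈ A → z ∉ A → A ∈ F ∨ Aᶜ ∈ F :=
        fun A h1 h2 h3 => hFcov A (Finset.mem_union_right _
          ((hfin y z).mem_toFinset.mpr ⟨h1, h2, h3⟩))
      have hiter := iter_lemma d hd lam F (fun A' h => (hF1 A' h).1) (fun A' h => (hF1 A' h).2)
        hF2 (fun A' h => hle A' (hF1 A' h))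
      have htri : d x z - ∑ A' ∈ F, lam A' * splitDist A' x z
          ≤ (d x y - ∑ A' ∈ F, lam A' * splitDist A' x y)
            + (d y z - ∑ A' ∈ F, lam A' * splitDist A' y z) := hiter.1.2.2 x y z
      rw [hmatch F hF1 hF2 x z cov1, hmatch F hF1 hF2 x y cov2, hmatch F hF1 hF2 y z cov3] at htri
      exact htri
  refine ⟨hfin, hpseudo, ?_⟩
  intro A B hAB0
  have hBc : B = Aᶜ := by
    obtain ⟨⟨hAne, hBne, hdisj⟩, huniv⟩ := hAB0
    ext u
    constructor
    · intro hu hua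
      exact Set.disjoint_right.mp hdisj hu hua
    · intro hu
      rcases (Set.mem_union u A B).mp (by rw [huniv]; exact Set.mem_univ u) with h | h
      · exact absurd h hu
      · exact h
  subst hBc
  have hAne := hAB0.1.1
  have hAcne := hAB0.1.2.1
  obtain ⟨a0, ha0⟩ := hAne
  obtain ⟨b0, hb0⟩ := hAcne
  -- the filter sum over {A' = A ∨ A' = Aᶜ}
  have hfiltsum : ∀ F : Finset (Set X), (∀ A' ∈ F, IsDSplit d A' A'ᶜ) → (∀ A' ∈ F, A'ᶜ ∉ F) →
      (IsDSplit d A Aᶜ → A ∈ F ∨ Aᶜ ∈ F) →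
      ∑ A' ∈ F.filter (fun A' => A' = A ∨ A' = Aᶜ), lam A' = lam A := by
    intro F hF1 hF2 hcov
    by_cases hA : IsDSplit d A Aᶜ
    · rcases hcov hA with h | h
      · have hset : F.filter (fun A' => A' = A ∨ A' = Aᶜ) = {A} := by
          apply Finset.ext
          intro B
          simp only [Finset.mem_filter, Finset.mem_singleton]
          constructor
          · rintro ⟨hBF, rfl | rfl⟩
            · rfl
            · exact absurd h (by simpa using hF2 _ hBF)
          · rintro rfl; exact ⟨h, Or.inl rfl⟩
        rw [hset, Finset.sum_singleton]
      · have hset : F.filter (fun A' => A' = A ∨ A' = Aᶜ) = {Aᶜ} := by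
          apply Finset.ext
          intro B
          simp only [Finset.mem_filter, Finset.mem_singleton]
          constructor
          · rintro ⟨hBF, rfl | rfl⟩
            · exact absurd hBF (by simpa using hF2 _ h)
            · rfl
          · rintro rfl; exact ⟨h, Or.inr rfl⟩
        rw [hset, Finset.sum_singleton, ← hsymm A]
    · have hset : F.filter (fun A' => A' = A ∨ A' = Aᶜ) = ∅ := by
        rw [Finset.filter_eq_empty_iff]
        rintro B hBF (rfl | rfl)
        · exact hA (hF1 _ hBF)
        · exact hA (by simpa using hdsplit_compl (hF1 _ hBF))
      rw [hset, Finset.sum_empty, hzero A hAB0 hA]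
  -- the key auxiliary family for a quadruple
  have hkey : ∀ a a' b b' : X, ∃ F : Finset (Set X),
      (∀ A' ∈ F, IsDSplit d A' A'ᶜ) ∧ (∀ A' ∈ F, A'ᶜ ∉ F) ∧
      (IsDSplit d A Aᶜ → A ∈ F ∨ Aᶜ ∈ F) ∧
      betaIdx (fun u v => d u v - ∑ A' ∈ F, lam A' * splitDist A' u v) a a' b b'
        = betaIdx dt a a' b b' ∧
      isolIdx (fun u v => d u v - ∑ A' ∈ F, lam A' * splitDist A' u v) A Aᶜ
        = isolIdx d A Aᶜ - lam A ∧
      (∀ p p' q q' : X,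
        betaIdx (fun u v => d u v - ∑ A' ∈ F, lam A' * splitDist A' u v) p p' q q'
          = betaIdx d p p' q q'
            - ∑ A' ∈ F.filter (fun A' => CrossQ A' p p' q q'), lam A') := by
    intro a a' b b'
    have hU6d : ∀ A' ∈ (((((hfin a b).toFinset ∪ (hfin a' b').toFinset) ∪ (hfin a' b).toFinset)
        ∪ (hfin a b').toFinset) ∪ (hfin a a').toFinset) ∪ (hfin b b').toFinset,
        IsDSplit d A' A'ᶜ := by
      intro A' h
      simp only [Finset.mem_union, Set.Finite.mem_toFinset, Set.mem_setOf_eq] at h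
      tauto
    by_cases hA : IsDSplit d A Aᶜ
    · obtain ⟨F, hF1, hF2, hFcov⟩ := hcover
        ((((((hfin a b).toFinset ∪ (hfin a' b').toFinset) ∪ (hfin a' b).toFinset)
          ∪ (hfin a b').toFinset) ∪ (hfin a a').toFinset) ∪ (hfin b b').toFinset ∪ {A})
        (by intro A' h
            rcases Finset.mem_union.mp h with h | h
            · exact hU6d A' h
            · rw [Finset.mem_singleton] at h; exact h ▸ hA)
      have hiter := iter_lemma d hd lam F (fun A' h => (hF1 A' h).1) (fun A' h => (hF1 A' h).2)
        hF2 (fun A' h => hle A' (hF1 A' h))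
      have hcovA : IsDSplit d A Aᶜ → A ∈ F ∨ Aᶜ ∈ F := fun _ =>
        hFcov A (Finset.mem_union_right _ (Finset.mem_singleton_self A))
      refine ⟨F, hF1, hF2, hcovA, ?_, ?_, hiter.2.2⟩
      · have m1 := hmatch F hF1 hF2 a b (fun A' h1 h2 h3 => hFcov A'
          (Finset.mem_union_left _ (Finset.mem_union_left _ (Finset.mem_union_left _
            (Finset.mem_union_left _ (Finset.mem_union_left _ (Finset.mem_union_left _
              ((hfin a b).mem_toFinset.mpr ⟨h1, h2, h3⟩))))))))
        have m2 := hmatch F hF1 hF2 a' b' (fun A' h1 h2 h3 => hFcov A'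
          (Finset.mem_union_left _ (Finset.mem_union_left _ (Finset.mem_union_left _
            (Finset.mem_union_left _ (Finset.mem_union_left _ (Finset.mem_union_right _
              ((hfin a' b').mem_toFinset.mpr ⟨h1, h2, h3⟩))))))))
        have m3 := hmatch F hF1 hF2 a' b (fun A' h1 h2 h3 => hFcov A'
          (Finset.mem_union_left _ (Finset.mem_union_left _ (Finset.mem_union_left _
            (Finset.mem_union_left _ (Finset.mem_union_right _
              ((hfin a' b).mem_toFinset.mpr ⟨h1, h2, h3⟩)))))))
        have m4 := hmatch F hF1 hF2 a b' (fun A' h1 h2 h3 => hFcov A'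
          (Finset.mem_union_left _ (Finset.mem_union_left _ (Finset.mem_union_left _
            (Finset.mem_union_right _ ((hfin a b').mem_toFinset.mpr ⟨h1, h2, h3⟩))))))
        have m5 := hmatch F hF1 hF2 a a' (fun A' h1 h2 h3 => hFcov A'
          (Finset.mem_union_left _ (Finset.mem_union_left _ (Finset.mem_union_right _
            ((hfin a a').mem_toFinset.mpr ⟨h1, h2, h3⟩)))))
        have m6 := hmatch F hF1 hF2 b b' (fun A' h1 h2 h3 => hFcov A'
          (Finset.mem_union_left _ (Finset.mem_union_right _
            ((hfin b b').mem_toFinset.mpr ⟨h1, h2, h3⟩))))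
        simp only [betaIdx]
        rw [m1, m2, m3, m4, m5, m6]
      · rw [hiter.2.1 A hAB0, hfiltsum F hF1 hF2 hcovA]
    · obtain ⟨F, hF1, hF2, hFcov⟩ := hcover
        ((((((hfin a b).toFinset ∪ (hfin a' b').toFinset) ∪ (hfin a' b).toFinset)
          ∪ (hfin a b').toFinset) ∪ (hfin a a').toFinset) ∪ (hfin b b').toFinset) hU6d
      have hiter := iter_lemma d hd lam F (fun A' h => (hF1 A' h).1) (fun A' h => (hF1 A' h).2)
        hF2 (fun A' h => hle A' (hF1 A' h))
      have hcovA : IsDSplit d A Aᶜ → A ∈ F ∨ Aᶜ ∈ F := fun h => absurd h hA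
      refine ⟨F, hF1, hF2, hcovA, ?_, ?_, hiter.2.2⟩
      · have m1 := hmatch F hF1 hF2 a b (fun A' h1 h2 h3 => hFcov A'
          (Finset.mem_union_left _ (Finset.mem_union_left _ (Finset.mem_union_left _
            (Finset.mem_union_left _ (Finset.mem_union_left _
              ((hfin a b).mem_toFinset.mpr ⟨h1, h2, h3⟩))))))
          )
        have m2 := hmatch F hF1 hF2 a' b' (fun A' h1 h2 h3 => hFcov A'
          (Finset.mem_union_left _ (Finset.mem_union_left _ (Finset.mem_union_left _
            (Finset.mem_union_left _ (Finset.mem_union_right _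
              ((hfin a' b').mem_toFinset.mpr ⟨h1, h2, h3⟩))))))
          )
        have m3 := hmatch F hF1 hF2 a' b (fun A' h1 h2 h3 => hFcov A'
          (Finset.mem_union_left _ (Finset.mem_union_left _ (Finset.mem_union_left _
            (Finset.mem_union_right _ ((hfin a' b).mem_toFinset.mpr ⟨h1, h2, h3⟩))))))
        have m4 := hmatch F hF1 hF2 a b' (fun A' h1 h2 h3 => hFcov A'
          (Finset.mem_union_left _ (Finset.mem_union_left _ (Finset.mem_union_right _
            ((hfin a b').mem_toFinset.mpr ⟨h1, h2, h3⟩)))))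
        have m5 := hmatch F hF1 hF2 a a' (fun A' h1 h2 h3 => hFcov A'
          (Finset.mem_union_left _ (Finset.mem_union_right _
            ((hfin a a').mem_toFinset.mpr ⟨h1, h2, h3⟩))))
        have m6 := hmatch F hF1 hF2 b b' (fun A' h1 h2 h3 => hFcov A'
          (Finset.mem_union_right _ ((hfin b b').mem_toFinset.mpr ⟨h1, h2, h3⟩)))
        simp only [betaIdx]
        rw [m1, m2, m3, m4, m5, m6]
      · rw [hiter.2.1 A hAB0, hfiltsum F hF1 hF2 hcovA]
  -- now the main equality
  apply le_antisymm
  · -- ≤ direction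
    apply le_of_forall_pos_le_add
    intro ε0 hε0
    have hε : 0 < min ε0 (1/4) := lt_min hε0 (by norm_num)
    have hε14 : min ε0 (1/4) ≤ 1/4 := min_le_right _ _
    have hεε0 : min ε0 (1/4) ≤ ε0 := min_le_left _ _
    -- minimal F₀
    by_cases hA : IsDSplit d A Aᶜ
    · -- F₀ = {A}
      have hF01 : ∀ A' ∈ ({A} : Finset (Set X)), IsDSplit d A' A'ᶜ := by
        intro A' h; rw [Finset.mem_singleton] at h; exact h ▸ hA
      have hF02 : ∀ A' ∈ ({A} : Finset (Set X)), A'ᶜ ∉ ({A} : Finset (Set X)) := by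
        intro A' h hc
        rw [Finset.mem_singleton] at h hc
        subst h
        exact hAneAc hA hc.symm
      have hiter0 := iter_lemma d hd lam {A} (fun A' h => (hF01 A' h).1)
        (fun A' h => (hF01 A' h).2) hF02 (fun A' h => hle A' (hF01 A' h))
      have hc0 : isolIdx (fun u v => d u v - ∑ A' ∈ ({A} : Finset (Set X)),
          lam A' * splitDist A' u v) A Aᶜ = isolIdx d A Aᶜ - lam A := by
        rw [hiter0.2.1 A hAB0, hfiltsum {A} hF01 hF02 (fun _ => Or.inl (Finset.mem_singleton_self A))]
      obtain ⟨r, ⟨a, ha, a', ha', b, hb, b', hb', rfl⟩, hrlt⟩ :=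
        exists_lt_of_csInf_lt
          (s := {r : ℝ | ∃ a ∈ A, ∃ a' ∈ A, ∃ b ∈ Aᶜ, ∃ b' ∈ Aᶜ, r = betaIdx
            (fun u v => d u v - ∑ A' ∈ ({A} : Finset (Set X)), lam A' * splitDist A' u v) a a' b b'})
          ⟨_, ⟨a0, ha0, a0, ha0, b0, hb0, b0, hb0, rfl⟩⟩
          (show isolIdx _ A Aᶜ < (isolIdx d A Aᶜ - lam A) + min ε0 (1/4) by rw [hc0]; linarith)
      -- F₀ cross sum at the quadruple
      have hcrA : CrossQ A a a' b b' := Or.inl ⟨ha, ha', hb, hb'⟩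
      have hF0cross : ∑ A' ∈ ({A} : Finset (Set X)).filter
          (fun A' => CrossQ A' a a' b b'), lam A' = lam A := by
        rw [Finset.filter_singleton, if_pos hcrA, Finset.sum_singleton]
      have hβF0 := hiter0.2.2 a a' b b'
      rw [hF0cross] at hβF0
      -- bound on betaIdx d
      have hβd : betaIdx d a a' b b' < isolIdx d A Aᶜ + min ε0 (1/4) := by
        rw [hβF0] at hrlt; linarith
      -- only A or Aᶜ can cross
      have honly : ∀ B : Set X, IsDSplit d B Bᶜ → CrossQ B a a' b b' → B = A ∨ B = Aᶜ := by
        intro B hBd hcr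
        by_contra hcon
        push_neg at hcon
        obtain ⟨hBA, hBAc⟩ := hcon
        have hhalf := half_lemma d hint hBd
        rcases hcr with ⟨h1, h2, h3, h4⟩ | ⟨h1, h2, h3, h4⟩
        · have := claimA d (A := B) (C := A) hBA h1 h2 h3 h4 ha ha' hb hb'
          linarith
        · have hBB : isolIdx d Bᶜ Bᶜᶜ = isolIdx d B Bᶜ := by
            rw [compl_compl]; exact isol_symm d hd.2.1 Bᶜ B
          have hne' : Bᶜ ≠ A := by
            intro h
            apply hBAc
            rw [← compl_compl B, h]
          have := claimA d (A := Bᶜ) (C := A) hne' h1 h2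
            (fun hc => hc h3) (fun hc => hc h4) ha ha' hb hb'
          rw [hBB] at this
          linarith
      -- G family
      obtain ⟨G, hG1, hG2, hG3, hGβ, hGisol, hGform⟩ := hkey a a' b b'
      have hGcross : ∑ A' ∈ G.filter (fun A' => CrossQ A' a a' b b'), lam A' = lam A := by
        rcases hG3 hA with h | h
        · have hset : G.filter (fun A' => CrossQ A' a a' b b') = {A} := by
            apply Finset.ext
            intro B
            simp only [Finset.mem_filter, Finset.mem_singleton]
            constructor
            · rintro ⟨hBG, hBcr⟩
              rcases honly B (hG1 B hBG) hBcr with rfl | rfl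
              · rfl
              · exact absurd h (by simpa using hG2 _ hBG)
            · rintro rfl; exact ⟨h, hcrA⟩
          rw [hset, Finset.sum_singleton]
        · have hcrAc : CrossQ Aᶜ a a' b b' :=
            Or.inr ⟨fun hc => hc ha, fun hc => hc ha', hb, hb'⟩
          have hset : G.filter (fun A' => CrossQ A' a a' b b') = {Aᶜ} := by
            apply Finset.ext
            intro B
            simp only [Finset.mem_filter, Finset.mem_singleton]
            constructor
            · rintro ⟨hBG, hBcr⟩
              rcases honly B (hG1 B hBG) hBcr with rfl | rfl
              · exact absurd hBG (by simpa using hG2 _ h)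
              · rfl
            · rintro rfl; exact ⟨h, hcrAc⟩
          rw [hset, Finset.sum_singleton, ← hsymm A]
      have hβG := hGform a a' b b'
      rw [hGcross] at hβG
      have hfinal : betaIdx dt a a' b b' < (isolIdx d A Aᶜ - lam A) + min ε0 (1/4) := by
        rw [← hGβ, hβG]
        rw [hβF0] at hrlt
        linarith
      have hmem := isol_le dt ha ha' hb hb'
      linarith
    · -- A is not a d-split : F₀ = ∅
      have hlamA := hzero A hAB0 hA
      have hiter0 := iter_lemma d hd lam (∅ : Finset (Set X)) (by simp) (by simp) (by simp) (by simp)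
      have hc0 : isolIdx (fun u v => d u v - ∑ A' ∈ (∅ : Finset (Set X)),
          lam A' * splitDist A' u v) A Aᶜ = isolIdx d A Aᶜ - lam A := by
        rw [hiter0.2.1 A hAB0]
        simp [hlamA]
      obtain ⟨r, ⟨a, ha, a', ha', b, hb, b', hb', rfl⟩, hrlt⟩ :=
        exists_lt_of_csInf_lt
          (s := {r : ℝ | ∃ a ∈ A, ∃ a' ∈ A, ∃ b ∈ Aᶜ, ∃ b' ∈ Aᶜ, r = betaIdx
            (fun u v => d u v - ∑ A' ∈ (∅ : Finset (Set X)), lam A' * splitDist A' u v) a a' b b'})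
          ⟨_, ⟨a0, ha0, a0, ha0, b0, hb0, b0, hb0, rfl⟩⟩
          (show isolIdx _ A Aᶜ < (isolIdx d A Aᶜ - lam A) + min ε0 (1/4) by rw [hc0]; linarith)
      have hβF0 : betaIdx (fun u v => d u v - ∑ A' ∈ (∅ : Finset (Set X)),
          lam A' * splitDist A' u v) a a' b b' = betaIdx d a a' b b' := by
        rw [hiter0.2.2 a a' b b']
        simp
      have hβd : betaIdx d a a' b b' < isolIdx d A Aᶜ + min ε0 (1/4) := by
        rw [hβF0] at hrlt; linarith
      have honly : ∀ B : Set X, IsDSplit d B Bᶜ → CrossQ B a a' b b' → False := by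
        intro B hBd hcr
        have hhalf := half_lemma d hint hBd
        have halnn := isol_nonneg d A Aᶜ
        by_cases hBA : B = A
        · exact hA (hBA ▸ hBd)
        by_cases hBAc : B = Aᶜ
        · apply hA
          subst hBAc
          exact (by simpa using hdsplit_compl hBd)
        rcases hcr with ⟨h1, h2, h3, h4⟩ | ⟨h1, h2, h3, h4⟩
        · have := claimA d (A := B) (C := A) hBA h1 h2 h3 h4 ha ha' hb hb'
          linarith
        · have hBB : isolIdx d Bᶜ Bᶜᶜ = isolIdx d B Bᶜ := by
            rw [compl_compl]; exact isol_symm d hd.2.1 Bᶜ B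
          have hne' : Bᶜ ≠ A := by
            intro h
            apply hBAc
            rw [← compl_compl B, h]
          have := claimA d (A := Bᶜ) (C := A) hne' h1 h2
            (fun hc => hc h3) (fun hc => hc h4) ha ha' hb hb'
          rw [hBB] at this
          linarith
      obtain ⟨G, hG1, hG2, hG3, hGβ, hGisol, hGform⟩ := hkey a a' b b'
      have hGcross : ∑ A' ∈ G.filter (fun A' => CrossQ A' a a' b b'), lam A' = 0 := by
        have hset : G.filter (fun A' => CrossQ A' a a' b b') = ∅ := by
          rw [Finset.filter_eq_empty_iff]
          intro B hBG hBcr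
          exact honly B (hG1 B hBG) hBcr
        rw [hset, Finset.sum_empty]
      have hβG := hGform a a' b b'
      rw [hGcross, sub_zero] at hβG
      have hmem := isol_le dt ha ha' hb hb'
      rw [← hGβ, hβG] at hmem
      rw [hβF0] at hrlt
      linarith
  · -- ≥ direction
    apply le_csInf
    · exact ⟨_, ⟨a0, ha0, a0, ha0, b0, hb0, b0, hb0, rfl⟩⟩
    · rintro r ⟨a, ha, a', ha', b, hb, b', hb', rfl⟩
      obtain ⟨F, hF1, hF2, hF3, hFβ, hFisol, hFform⟩ := hkey a a' b b'
      have hmem := isol_le (fun u v => d u v - ∑ A' ∈ F, lam A' * splitDist A' u v)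
        ha ha' hb hb'
      rw [hFβ, hFisol] at hmem
      exact hmem
end
end
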